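/- arXiv:2506.05791 — 9 statements merged into one kernel-verified Lean document; each statement's English description precedes it below -/
import Mathlib

section
/- (Gradient-tracking error recursion.) Assume each f_i is L-smooth and the family is δ-similar; let W be a gossip matrix with spectral gap parameter ρ ∈ [0,1). Let (x_i^{(r)})_{1≤i≤n, r≥0} be arbitrary points in ℝ^d and define h_i^{(r+1)} := ∑_{j=1}^n W_{ij}·(h_j^{(r)} + ∇f_j(x_j^{(r+1)})) − ∇f_i(x_i^{(r+1)}), starting from h_i^{(0)} with ∑_{i=1}^n h_i^{(0)} = 0. Then: (a) ∑_{i=1}^n h_i^{(r)} = 0 for all r ≥ 0; and (b) for all r ≥ 0, E^{(r+1)} ≤ 4ρ²·E^{(r)} + 4ρ²δ²·‖x̄^{(r+1)} − x̄^{(r)}‖² + 32L²·Ξ^{(r+1)}, where E^{(r)} := (1/n)·∑_{i=1}^n ‖h_i^{(r)} − ∇h_i(x̄^{(r)})‖², Ξ^{(r)} := (1/n)·∑_{i=1}^n ‖x_i^{(r)} − x̄^{(r)}‖², and x̄^{(r)} := (1/n)·∑_{i=1}^n x_i^{(r)}. -/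
open scoped BigOperators

abbrev Vec (d : ℕ) := EuclideanSpace ℝ (Fin d)

/-!
Put `p = h - ∇h(x̄)`, `q = ∇h(x̄) - ∇h(x̄')` and let `c` be the centring of
`i ↦ ∇f_i(x_i') - ∇f_i(x̄')`. Because `W` has unit row sums, the new tracking error is
`Wp + Wq + (Wc - c)`. Each of `p`, `q`, `c` sums to zero (for `p` this is the invariant (a), which
holds because `W` has unit column sums), so the spectral gap contracts each of them by `ρ`. Two uses
of `‖a + b‖² ≤ 2‖a‖² + 2‖b‖²`, the fact that centring does not increase `∑ ‖c_i‖²`, and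
`L`-smoothness then give the recursion.
-/

open Finset

namespace GradientTracking

section Averaging

variable {ι E : Type*} [Fintype ι] [AddCommGroup E] [Module ℝ E]

noncomputable def mean (z : ι → E) : E := (Fintype.card ι : ℝ)⁻¹ • ∑ i, z i

noncomputable def center (z : ι → E) (i : ι) : E := z i - mean z

def mix (W : Matrix ι ι ℝ) (z : ι → E) (i : ι) : E := ∑ j, W i j • z j

lemma mean_fin {n : ℕ} (z : Fin n → E) : mean z = (1 / (n : ℝ)) • ∑ i, z i := by
  simp [mean]

lemma sum_center (z : ι → E) : ∑ i, center z i = 0 := by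
  rcases isEmpty_or_nonempty ι with hι | hι
  · simp
  · simp only [center]
    rw [sum_sub_distrib, sum_const, card_univ, ← Nat.cast_smul_eq_nsmul ℝ, mean,
      smul_smul, mul_inv_cancel₀ (by positivity), one_smul, sub_self]

lemma mix_add (W : Matrix ι ι ℝ) (u v : ι → E) (i : ι) :
    mix W (u + v) i = mix W u i + mix W v i := by
  simp only [mix, Pi.add_apply, smul_add, sum_add_distrib]

lemma mix_sub_const {W : Matrix ι ι ℝ} (hrow : ∀ i, ∑ j, W i j = 1) (u : ι → E) (a : E)
    (i : ι) : mix W (fun j => u j - a) i = mix W u i - a := by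
  simp only [mix, smul_sub, sum_sub_distrib, ← sum_smul, hrow, one_smul]

lemma sum_mix {W : Matrix ι ι ℝ} (hcol : ∀ j, ∑ i, W i j = 1) (z : ι → E) :
    ∑ i, mix W z i = ∑ j, z j := by
  simp only [mix]
  rw [sum_comm]
  simp only [← sum_smul, hcol, one_smul]

end Averaging

section Norms

variable {ι E : Type*} [Fintype ι] [SeminormedAddCommGroup E]

lemma sum_norm_add_sq_le (u v : ι → E) :
    ∑ i, ‖u i + v i‖ ^ 2 ≤ 2 * ∑ i, ‖u i‖ ^ 2 + 2 * ∑ i, ‖v i‖ ^ 2 := by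
  rw [mul_sum, mul_sum, ← sum_add_distrib]
  refine sum_le_sum fun i _ => ?_
  nlinarith [norm_add_le (u i) (v i), norm_nonneg (u i + v i), add_sq_le (a := ‖u i‖) (b := ‖v i‖)]

lemma sum_norm_sub_sq_le (u v : ι → E) :
    ∑ i, ‖u i - v i‖ ^ 2 ≤ 2 * ∑ i, ‖u i‖ ^ 2 + 2 * ∑ i, ‖v i‖ ^ 2 := by
  simpa [sub_eq_add_neg] using sum_norm_add_sq_le u (fun i => -v i)

lemma sum_norm_sub_sq_le_of_lipschitz {L : ℝ} {g : ι → E → E}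
    (hg : ∀ i x y, ‖g i x - g i y‖ ≤ L * ‖x - y‖) (x : ι → E) (y : E) :
    ∑ i, ‖g i (x i) - g i y‖ ^ 2 ≤ L ^ 2 * ∑ i, ‖x i - y‖ ^ 2 := by
  rw [mul_sum]
  refine sum_le_sum fun i _ => ?_
  rw [← mul_pow]
  exact pow_le_pow_left₀ (norm_nonneg _) (hg i (x i) y) 2

end Norms

section Tracking

variable {ι E : Type*} [Fintype ι] [NormedAddCommGroup E] [InnerProductSpace ℝ E]

lemma sum_norm_center_sq_le (z : ι → E) : ∑ i, ‖center z i‖ ^ 2 ≤ ∑ i, ‖z i‖ ^ 2 := by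
  have hsplit : ∑ i, ‖z i‖ ^ 2 = ∑ i, ‖center z i‖ ^ 2 + Fintype.card ι * ‖mean z‖ ^ 2 := by
    calc ∑ i, ‖z i‖ ^ 2 = ∑ i, ‖center z i + mean z‖ ^ 2 := by simp [center]
      _ = ∑ i, ‖center z i‖ ^ 2 + 2 * inner ℝ (∑ i, center z i) (mean z)
            + Fintype.card ι * ‖mean z‖ ^ 2 := by
        simp only [norm_add_sq_real, sum_add_distrib, sum_inner, mul_sum, sum_const, card_univ,
          nsmul_eq_mul]
      _ = _ := by rw [sum_center, inner_zero_left, mul_zero, add_zero]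
  have : (0 : ℝ) ≤ Fintype.card ι * ‖mean z‖ ^ 2 := by positivity
  linarith

-- `∇h_i(y)` for `h_i = f - f_i`
noncomputable def gradDeviation (g : ι → E → E) (y : E) (i : ι) : E :=
  mean (fun j => g j y) - g i y

lemma sum_gradDeviation (g : ι → E → E) (y : E) : ∑ i, gradDeviation g y i = 0 := by
  rw [← neg_eq_zero, ← sum_neg_distrib]
  simpa only [gradDeviation, center, neg_sub] using sum_center fun j => g j y

def trackStep (W : Matrix ι ι ℝ) (g : ι → E → E) (h x : ι → E) (i : ι) : E :=
  mix W (fun j => h j + g j (x j)) i - g i (x i)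

lemma sum_trackStep {W : Matrix ι ι ℝ} (hcol : ∀ j, ∑ i, W i j = 1) (g : ι → E → E)
    (h x : ι → E) : ∑ i, trackStep W g h x i = ∑ i, h i := by
  simp only [trackStep, sum_sub_distrib, sum_mix hcol, sum_add_distrib, add_sub_cancel_right]

lemma trackStep_sub_gradDeviation {W : Matrix ι ι ℝ} (hrow : ∀ i, ∑ j, W i j = 1)
    (g : ι → E → E) (h x : ι → E) (y y' : E) (i : ι) :
    trackStep W g h x i - gradDeviation g y' i
      = mix W (fun j => h j - gradDeviation g y j) i
        + mix W (fun j => gradDeviation g y j - gradDeviation g y' j) i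
        + (mix W (center fun j => g j (x j) - g j y') i
          - center (fun j => g j (x j) - g j y') i) := by
  rw [← add_sub_assoc, ← mix_add, ← mix_add]
  have hdecomp : (fun j => h j - gradDeviation g y j)
      + (fun j => gradDeviation g y j - gradDeviation g y' j)
      + (center fun j => g j (x j) - g j y')
      = fun j => (h j + g j (x j))
          - (mean (fun k => g k y') + mean fun k => g k (x k) - g k y') := by
    funext j
    simp only [Pi.add_apply, gradDeviation, center]
    abel
  rw [hdecomp, mix_sub_const hrow]
  simp only [trackStep, gradDeviation, center]
  abel

theorem sum_norm_trackStep_sub_gradDeviation_sq_le {W : Matrix ι ι ℝ} {ρ L : ℝ}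
    (hrow : ∀ i, ∑ j, W i j = 1)
    (hgap : ∀ z : ι → E, ∑ i, z i = 0 → ∑ i, ‖mix W z i‖ ^ 2 ≤ ρ ^ 2 * ∑ i, ‖z i‖ ^ 2)
    (hρ : ρ ^ 2 ≤ 1) {g : ι → E → E} (hg : ∀ i x y, ‖g i x - g i y‖ ≤ L * ‖x - y‖)
    {h : ι → E} (hh : ∑ i, h i = 0) (x : ι → E) (y y' : E) :
    ∑ i, ‖trackStep W g h x i - gradDeviation g y' i‖ ^ 2
      ≤ 4 * ρ ^ 2 * ∑ i, ‖h i - gradDeviation g y i‖ ^ 2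
        + 4 * ρ ^ 2 * ∑ i, ‖gradDeviation g y i - gradDeviation g y' i‖ ^ 2
        + 8 * L ^ 2 * ∑ i, ‖x i - y'‖ ^ 2 := by
  set p := fun j => h j - gradDeviation g y j
  set q := fun j => gradDeviation g y j - gradDeviation g y' j
  set c := center fun j => g j (x j) - g j y'
  have hp := hgap p (by simp only [p, sum_sub_distrib, hh, sum_gradDeviation, sub_zero])
  have hq := hgap q (by simp only [q, sum_sub_distrib, sum_gradDeviation, sub_zero])
  have hc := hgap c (sum_center _)
  have hcL : ∑ i, ‖c i‖ ^ 2 ≤ L ^ 2 * ∑ i, ‖x i - y'‖ ^ 2 :=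
    (sum_norm_center_sq_le _).trans (sum_norm_sub_sq_le_of_lipschitz hg x y')
  have hρc : ρ ^ 2 * ∑ i, ‖c i‖ ^ 2 ≤ ∑ i, ‖c i‖ ^ 2 :=
    mul_le_of_le_one_left (sum_nonneg fun i _ => sq_nonneg _) hρ
  calc ∑ i, ‖trackStep W g h x i - gradDeviation g y' i‖ ^ 2
      = ∑ i, ‖(mix W p i + mix W q i) + (mix W c i - c i)‖ ^ 2 := by
        simp only [trackStep_sub_gradDeviation hrow g h x y y', p, q, c]
    _ ≤ 2 * ∑ i, ‖mix W p i + mix W q i‖ ^ 2 + 2 * ∑ i, ‖mix W c i - c i‖ ^ 2 :=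
        sum_norm_add_sq_le _ _
    _ ≤ 2 * (2 * ∑ i, ‖mix W p i‖ ^ 2 + 2 * ∑ i, ‖mix W q i‖ ^ 2)
          + 2 * (2 * ∑ i, ‖mix W c i‖ ^ 2 + 2 * ∑ i, ‖c i‖ ^ 2) := by
        gcongr
        · exact sum_norm_add_sq_le _ _
        · exact sum_norm_sub_sq_le _ _
    _ ≤ _ := by linarith

end Tracking

end GradientTracking

open GradientTracking in
theorem stmt_3_general (d n : ℕ)
    (g : Fin n → Vec d → Vec d)
    (L δ ρ : ℝ) (hρ0 : 0 ≤ ρ) (hρ1 : ρ < 1)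
    (hsmooth : ∀ i (x y : Vec d), ‖g i x - g i y‖ ≤ L * ‖x - y‖)
    (hsim : ∀ x y : Vec d,
      (1 / (n : ℝ)) * ∑ i, ‖(((1 / (n : ℝ)) • ∑ j, g j x) - g i x)
          - (((1 / (n : ℝ)) • ∑ j, g j y) - g i y)‖ ^ 2
        ≤ δ ^ 2 * ‖x - y‖ ^ 2)
    (W : Matrix (Fin n) (Fin n) ℝ)
    (hWsymm : ∀ i j, W i j = W j i)
    (hWcol : ∀ j, ∑ i, W i j = 1)
    (hWgap : ∀ z : Fin n → Vec d,
      ∑ i, ‖(∑ j, W i j • z j) - (1 / (n : ℝ)) • ∑ k, z k‖ ^ 2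
        ≤ ρ ^ 2 * ∑ i, ‖z i - (1 / (n : ℝ)) • ∑ k, z k‖ ^ 2)
    (x h : ℕ → Fin n → Vec d)
    (hrec : ∀ r i, h (r + 1) i
      = (∑ j, W i j • (h r j + g j (x (r + 1) j))) - g i (x (r + 1) i))
    (h0 : ∑ i, h 0 i = 0)
    (xbar : ℕ → Vec d)
    (Err Xi : ℕ → ℝ)
    (hErr : ∀ r, Err r = (1 / (n : ℝ)) * ∑ i,
      ‖h r i - (((1 / (n : ℝ)) • ∑ j, g j (xbar r)) - g i (xbar r))‖ ^ 2)
    (hXi : ∀ r, Xi r = (1 / (n : ℝ)) * ∑ i, ‖x r i - xbar r‖ ^ 2) :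
    (∀ r, ∑ i, h r i = 0) ∧
    (∀ r, Err (r + 1)
      ≤ 4 * ρ ^ 2 * Err r + 4 * ρ ^ 2 * δ ^ 2 * ‖xbar (r + 1) - xbar r‖ ^ 2
        + 32 * L ^ 2 * Xi (r + 1)) := by
  have hstep : ∀ r, h (r + 1) = trackStep W g (h r) (x (r + 1)) := fun r => funext (hrec r)
  have hsum : ∀ r, ∑ i, h r i = 0 := by
    intro r
    induction r with
    | zero => exact h0
    | succ r ih => rw [hstep, sum_trackStep hWcol, ih]
  refine ⟨hsum, fun r => ?_⟩
  have hrow : ∀ i, ∑ j, W i j = 1 := fun i => by simpa only [hWsymm i] using hWcol i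
  have hgap : ∀ z : Fin n → Vec d, ∑ i, z i = 0 →
      ∑ i, ‖mix W z i‖ ^ 2 ≤ ρ ^ 2 * ∑ i, ‖z i‖ ^ 2 := fun z hz => by
    simpa [mix, hz] using hWgap z
  have hbound := sum_norm_trackStep_sub_gradDeviation_sq_le hrow hgap
    (pow_le_one₀ hρ0 hρ1.le) hsmooth (hsum r) (x (r + 1)) (xbar r) (xbar (r + 1))
  rw [← hstep] at hbound
  simp only [gradDeviation, mean_fin] at hbound
  have hsim' := hsim (xbar r) (xbar (r + 1))
  rw [norm_sub_rev] at hsim'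
  rw [hErr, hErr, hXi]
  have hscaled := mul_le_mul_of_nonneg_left hbound (by positivity : (0 : ℝ) ≤ 1 / n)
  have hsimρ := mul_le_mul_of_nonneg_left hsim' (sq_nonneg ρ)
  have hXi_nonneg : 0 ≤ L ^ 2 * (1 / (n : ℝ) * ∑ i, ‖x (r + 1) i - xbar (r + 1)‖ ^ 2) := by
    positivity
  linarith

/-- Gradient-tracking error recursion: the tracking variables preserve zero sum,
and the tracking error satisfies
`E^{(r+1)} ≤ 4ρ²·E^{(r)} + 4ρ²δ²·‖x̄^{(r+1)} − x̄^{(r)}‖² + 32L²·Ξ^{(r+1)}`. -/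
theorem stmt_3 (d n : ℕ) (hn : 1 ≤ n)
    (f : Fin n → Vec d → ℝ) (g : Fin n → Vec d → Vec d)
    (hdiff : ∀ i x, HasGradientAt (f i) (g i x) x)
    (L δ ρ : ℝ) (hL : 0 < L) (hδ : 0 < δ) (hρ0 : 0 ≤ ρ) (hρ1 : ρ < 1)
    (hsmooth : ∀ i (x y : Vec d), ‖g i x - g i y‖ ≤ L * ‖x - y‖)
    (hsim : ∀ x y : Vec d,
      (1 / (n : ℝ)) * ∑ i, ‖(((1 / (n : ℝ)) • ∑ j, g j x) - g i x)
          - (((1 / (n : ℝ)) • ∑ j, g j y) - g i y)‖ ^ 2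
        ≤ δ ^ 2 * ‖x - y‖ ^ 2)
    (W : Matrix (Fin n) (Fin n) ℝ)
    (hWsymm : ∀ i j, W i j = W j i)
    (hWcol : ∀ j, ∑ i, W i j = 1)
    (hWgap : ∀ z : Fin n → Vec d,
      ∑ i, ‖(∑ j, W i j • z j) - (1 / (n : ℝ)) • ∑ k, z k‖ ^ 2
        ≤ ρ ^ 2 * ∑ i, ‖z i - (1 / (n : ℝ)) • ∑ k, z k‖ ^ 2)
    (x h : ℕ → Fin n → Vec d)
    (hrec : ∀ r i, h (r + 1) i
      = (∑ j, W i j • (h r j + g j (x (r + 1) j))) - g i (x (r + 1) i))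
    (h0 : ∑ i, h 0 i = 0)
    (xbar : ℕ → Vec d) (hxbar : ∀ r, xbar r = (1 / (n : ℝ)) • ∑ i, x r i)
    (Err Xi : ℕ → ℝ)
    (hErr : ∀ r, Err r = (1 / (n : ℝ)) * ∑ i,
      ‖h r i - (((1 / (n : ℝ)) • ∑ j, g j (xbar r)) - g i (xbar r))‖ ^ 2)
    (hXi : ∀ r, Xi r = (1 / (n : ℝ)) * ∑ i, ‖x r i - xbar r‖ ^ 2) :
    (∀ r, ∑ i, h r i = 0) ∧
    (∀ r, Err (r + 1)
      ≤ 4 * ρ ^ 2 * Err r + 4 * ρ ^ 2 * δ ^ 2 * ‖xbar (r + 1) - xbar r‖ ^ 2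
        + 32 * L ^ 2 * Xi (r + 1)) :=
  stmt_3_general d n g L δ ρ hρ0 hρ1 hsmooth hsim W hWsymm hWcol hWgap x h hrec h0 xbar Err Xi hErr
    hXi
end

section
/- (Simplified one-round recursion of PDO with λ = 4δ.) Assume each f_i is μ-strongly convex (μ ≥ 0) and L-smooth, the family is δ-similar with 0 < δ ≤ L and μ ≤ L; let W be a gossip matrix with spectral gap parameter ρ ∈ (0,1) with ρ ≤ δ/(6L), set λ := 4δ, and let x⋆ be a minimizer of f. At round r, let x_i^{(r)}, h_i^{(r)} ∈ ℝ^d with ∑_{i=1}^n h_i^{(r)} = 0; define F_{i,r}(x) := f_i(x) + ⟨h_i^{(r)}, x⟩ + (λ/2)·‖x − x_i^{(r)}‖²; let x_i^{(r+1/2)} ∈ ℝ^d be arbitrary, x_i^{(r+1)} := ∑_j W_{ij}·x_j^{(r+1/2)}, and h_i^{(r+1)} := ∑_j W_{ij}·(h_j^{(r)} + ∇f_j(x_j^{(r+1)})) − ∇f_i(x_i^{(r+1)}). Then, with x̄^{(s)} := (1/n)·∑_i x_i^{(s)} and E^{(s)} := (1/n)·∑_i ‖h_i^{(s)} − ∇h_i(x̄^{(s)})‖²: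 f(x⋆) + (2δ/n)·∑_i ‖x_i^{(r)} − x⋆‖² + (1/δ)·E^{(r)} ≥ f(x̄^{(r+1)}) + (1 + μ/(4δ))·(2δ/n)·∑_i ‖x_i^{(r+1)} − x⋆‖² + (1/δ)·(1 + μ/(4δ))·E^{(r+1)} + (δ/n)·∑_i ‖x_i^{(r+1/2)} − x_i^{(r)}‖² + (1/n)·∑_i ⟨∇F_{i,r}(x_i^{(r+1/2)}), x⋆ − x_i^{(r+1/2)}⟩. -/
open scoped BigOperators RealInnerProductSpace

/-!
Each node's prox objective `f_i + ⟪h_i, ·⟫ + 2δ‖· - x_i^{(r)}‖²` is `(μ + 4δ)`-strongly convex;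
summing its first-order inequality between `x_i^{(r+1/2)}` and `x⋆` (the `h_i` cancel, since they
sum to zero) gives the main descent estimate, in which the distance of the half-step iterates to
`x⋆` splits into their consensus error and the distance of their mean `x̄` to `x⋆`. Convexity of
the `f_i` at `x̄` and Young's inequality bound `f(x̄)` by the prox objectives plus the consensus
error and the error of the `h_i` at `x̄`, which δ-similarity compares with `E^{(r)}`. Gossip
preserves `x̄` and contracts by `ρ²` both the consensus error of the iterates and the spread of
the tracked gradients, and `ρ ≤ δ/(6L)` makes every contracted term small enough to be absorbed.
-/

open Finset

section

variable {E : Type*} [NormedAddCommGroup E]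

lemma norm_add_sq_le_two_mul (a b : E) : ‖a + b‖ ^ 2 ≤ 2 * (‖a‖ ^ 2 + ‖b‖ ^ 2) :=
  (pow_le_pow_left₀ (norm_nonneg _) (norm_add_le a b) 2).trans add_sq_le

lemma norm_sub_sq_le_two_mul (a b : E) : ‖a - b‖ ^ 2 ≤ 2 * (‖a‖ ^ 2 + ‖b‖ ^ 2) := by
  simpa only [sub_eq_add_neg, norm_neg] using norm_add_sq_le_two_mul a (-b)

lemma norm_sum_sq_le_card_mul {ι : Type*} (s : Finset ι) (v : ι → E) :
    ‖∑ i ∈ s, v i‖ ^ 2 ≤ #s * ∑ i ∈ s, ‖v i‖ ^ 2 :=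
  (pow_le_pow_left₀ (norm_nonneg _) (norm_sum_le s v) 2).trans (sq_sum_le_card_mul_sum_sq ..)

lemma sum_norm_sub_sq_le_of_lipschitz {ι : Type*} {g : ι → E → E} {L : ℝ}
    (hg : ∀ i x y, ‖g i x - g i y‖ ≤ L * ‖x - y‖) (s : Finset ι) (x : ι → E) (c : E) :
    ∑ i ∈ s, ‖g i (x i) - g i c‖ ^ 2 ≤ L ^ 2 * ∑ i ∈ s, ‖x i - c‖ ^ 2 := by
  rw [mul_sum]
  gcongr with i
  rw [← mul_pow]
  exact pow_le_pow_left₀ (norm_nonneg _) (hg i _ _) 2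

variable [InnerProductSpace ℝ E]

lemma real_inner_le_div_add_mul_sq {δ : ℝ} (hδ : 0 < δ) (a b : E) :
    ⟪a, b⟫ ≤ ‖a‖ ^ 2 / (4 * δ) + δ * ‖b‖ ^ 2 := by
  have hsq : ‖a‖ ^ 2 / (4 * δ) + δ * ‖b‖ ^ 2 - ‖a‖ * ‖b‖
      = (‖a‖ - 2 * δ * ‖b‖) ^ 2 / (4 * δ) := by
    field_simp; ring
  have : 0 ≤ (‖a‖ - 2 * δ * ‖b‖) ^ 2 / (4 * δ) := by positivity
  linarith [real_inner_le_norm a b]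

/-- The strong convexity inequality between `y` and `x` of the prox objective
`f + ⟪h, ·⟫ + lam / 2 * ‖· - z‖ ^ 2`, whose gradient at `y` is `g y + h + lam • (y - z)`. -/
lemma prox_three_point {f : E → ℝ} {g : E → E} {μ : ℝ} {x y : E}
    (hsc : f y + ⟪g y, x - y⟫ + μ / 2 * ‖x - y‖ ^ 2 ≤ f x) (h z : E) (lam : ℝ) :
    f y + ⟪h, y⟫ + ⟪g y + h + lam • (y - z), x - y⟫ + lam / 2 * ‖y - z‖ ^ 2
        + (μ + lam) / 2 * ‖y - x‖ ^ 2
      ≤ f x + ⟪h, x⟫ + lam / 2 * ‖z - x‖ ^ 2 := by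
  have hz : ‖z - x‖ ^ 2 = ‖y - z‖ ^ 2 + 2 * ⟪y - z, x - y⟫ + ‖x - y‖ ^ 2 := by
    rw [← norm_add_sq_real, norm_sub_rev]; congr 2; abel
  rw [hz, norm_sub_rev y x, inner_add_left, inner_add_left, real_inner_smul_left,
    inner_sub_right h x y]
  linarith

variable {n : ℕ}

noncomputable def mean (x : Fin n → E) : E := (1 / (n : ℝ)) • ∑ i, x i

lemma mean_add (x y : Fin n → E) : mean (fun i => x i + y i) = mean x + mean y := by
  simp only [mean, sum_add_distrib, smul_add]

lemma mean_sub (x y : Fin n → E) : mean (fun i => x i - y i) = mean x - mean y := by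
  simp only [mean, sum_sub_distrib, smul_sub]

lemma sum_sub_mean (x : Fin n → E) : ∑ i, (x i - mean x) = 0 := by
  rcases eq_or_ne n 0 with rfl | hn
  · simp
  · rw [sum_sub_distrib, sum_const, card_univ, Fintype.card_fin, ← Nat.cast_smul_eq_nsmul ℝ,
      mean, smul_smul, mul_one_div_cancel (Nat.cast_ne_zero.2 hn), one_smul, sub_self]

lemma sum_norm_sub_sq_eq (x : Fin n → E) (p : E) :
    ∑ i, ‖x i - p‖ ^ 2 = ∑ i, ‖x i - mean x‖ ^ 2 + n * ‖mean x - p‖ ^ 2 := by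
  have hsplit : ∀ i, ‖x i - p‖ ^ 2
      = ‖x i - mean x‖ ^ 2 + 2 * ⟪x i - mean x, mean x - p⟫ + ‖mean x - p‖ ^ 2 := fun i => by
    rw [← norm_add_sq_real, sub_add_sub_cancel]
  simp only [hsplit, sum_add_distrib, ← mul_sum, ← sum_inner, sum_sub_mean, inner_zero_left,
    sum_const, card_univ, Fintype.card_fin, nsmul_eq_mul]
  ring

lemma sum_norm_sub_mean_sq_le (x : Fin n → E) (p : E) :
    ∑ i, ‖x i - mean x‖ ^ 2 ≤ ∑ i, ‖x i - p‖ ^ 2 := by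
  rw [sum_norm_sub_sq_eq x p]
  have : 0 ≤ (n : ℝ) * ‖mean x - p‖ ^ 2 := by positivity
  linarith

lemma mul_norm_mean_sub_mean_sq_le (x y : Fin n → E) :
    n * ‖mean x - mean y‖ ^ 2 ≤ ∑ i, ‖x i - y i‖ ^ 2 := by
  rcases eq_or_ne n 0 with rfl | hn
  · simp
  have hjensen := norm_sum_sq_le_card_mul univ (fun i => x i - y i)
  rw [card_univ, Fintype.card_fin] at hjensen
  rw [← mean_sub, mean, norm_smul, mul_pow, Real.norm_eq_abs, sq_abs]
  calc (n : ℝ) * ((1 / n) ^ 2 * ‖∑ i, (x i - y i)‖ ^ 2)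
      ≤ n * ((1 / n) ^ 2 * (n * ∑ i, ‖x i - y i‖ ^ 2)) := by gcongr
    _ = ∑ i, ‖x i - y i‖ ^ 2 := by field_simp

lemma mean_gossip {W : Matrix (Fin n) (Fin n) ℝ} (hW : ∀ j, ∑ i, W i j = 1)
    (x : Fin n → E) :
    mean (fun i => ∑ j, W i j • x j) = mean x := by
  rw [mean, mean, sum_comm]
  simp only [← sum_smul, hW, one_smul]

variable {g : Fin n → E → E}

/-- With `g i = ∇f_i`, `heteroGrad g x i` is `∇h_i(x) = ∇f(x) - ∇f_i(x)`. -/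
noncomputable def heteroGrad (g : Fin n → E → E) (x : E) (i : Fin n) : E :=
  mean (fun j => g j x) - g i x

lemma sum_norm_heteroGrad_mean_sub_sq_le {δ : ℝ}
    (hsim : ∀ x y : E,
      (1 / (n : ℝ)) * ∑ i, ‖heteroGrad g x i - heteroGrad g y i‖ ^ 2 ≤ δ ^ 2 * ‖x - y‖ ^ 2)
    (x y : Fin n → E) :
    ∑ i, ‖heteroGrad g (mean x) i - heteroGrad g (mean y) i‖ ^ 2
      ≤ δ ^ 2 * ∑ i, ‖x i - y i‖ ^ 2 := by
  rcases eq_or_ne n 0 with rfl | hn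
  · simp
  have hn' : (0 : ℝ) < n := by positivity
  calc ∑ i, ‖heteroGrad g (mean x) i - heteroGrad g (mean y) i‖ ^ 2
      = n * ((1 / (n : ℝ))
          * ∑ i, ‖heteroGrad g (mean x) i - heteroGrad g (mean y) i‖ ^ 2) := by
        field_simp
    _ ≤ n * (δ ^ 2 * ‖mean x - mean y‖ ^ 2) := mul_le_mul_of_nonneg_left (hsim _ _) hn'.le
    _ = δ ^ 2 * (n * ‖mean x - mean y‖ ^ 2) := by ring
    _ ≤ δ ^ 2 * ∑ i, ‖x i - y i‖ ^ 2 := by gcongr; exact mul_norm_mean_sub_mean_sq_le x y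

lemma sum_norm_sub_heteroGrad_mean_sq_le {δ : ℝ}
    (hsim : ∀ x y : E,
      (1 / (n : ℝ)) * ∑ i, ‖heteroGrad g x i - heteroGrad g y i‖ ^ 2 ≤ δ ^ 2 * ‖x - y‖ ^ 2)
    (h x y : Fin n → E) :
    ∑ i, ‖h i - heteroGrad g (mean x) i‖ ^ 2
      ≤ 2 * ∑ i, ‖h i - heteroGrad g (mean y) i‖ ^ 2
        + 2 * (δ ^ 2 * ∑ i, ‖x i - y i‖ ^ 2) := by
  have hdrift := sum_norm_heteroGrad_mean_sub_sq_le hsim x y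
  calc ∑ i, ‖h i - heteroGrad g (mean x) i‖ ^ 2
      ≤ ∑ i, 2 * (‖h i - heteroGrad g (mean y) i‖ ^ 2
          + ‖heteroGrad g (mean x) i - heteroGrad g (mean y) i‖ ^ 2) := by
        gcongr with i
        rw [← sub_sub_sub_cancel_right (h i) _ (heteroGrad g (mean y) i)]
        exact norm_sub_sq_le_two_mul _ _
    _ ≤ _ := by rw [← mul_sum, sum_add_distrib]; linarith

lemma sum_prox_three_point {f : Fin n → E → ℝ} {μ : ℝ}
    (hsc : ∀ i x y, f i y + ⟪g i y, x - y⟫ + μ / 2 * ‖x - y‖ ^ 2 ≤ f i x)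
    {h : Fin n → E} (hh : ∑ i, h i = 0) (z y : Fin n → E) (x : E) (lam : ℝ) :
    ∑ i, (f i (y i) + ⟪h i, y i⟫) + ∑ i, ⟪g i (y i) + h i + lam • (y i - z i), x - y i⟫
        + lam / 2 * ∑ i, ‖y i - z i‖ ^ 2 + (μ + lam) / 2 * ∑ i, ‖y i - x‖ ^ 2
      ≤ ∑ i, f i x + lam / 2 * ∑ i, ‖z i - x‖ ^ 2 := by
  have hsum := sum_le_sum fun i (_ : i ∈ univ) =>
    prox_three_point (hsc i x (y i)) (h i) (z i) lam
  have hx : ∑ i, ⟪h i, x⟫ = 0 := by rw [← sum_inner, hh, inner_zero_left]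
  simp only [sum_add_distrib, ← mul_sum, hx] at hsum
  rw [sum_add_distrib]
  linarith

lemma sum_apply_mean_le {f : Fin n → E → ℝ} {δ : ℝ} (hδ : 0 < δ)
    (hconv : ∀ i x y, f i y + ⟪g i y, x - y⟫ ≤ f i x) {h : Fin n → E} (hh : ∑ i, h i = 0)
    (x : Fin n → E) :
    ∑ i, f i (mean x) ≤ ∑ i, (f i (x i) + ⟪h i, x i⟫)
      + (∑ i, ‖h i - heteroGrad g (mean x) i‖ ^ 2) / (4 * δ)
      + δ * ∑ i, ‖x i - mean x‖ ^ 2 := by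
  have hG : ∑ i, ⟪mean (fun j => g j (mean x)), x i - mean x⟫ = 0 := by
    rw [← inner_sum, sum_sub_mean, inner_zero_right]
  have hH : ∑ i, ⟪h i, mean x⟫ = 0 := by rw [← sum_inner, hh, inner_zero_left]
  have hlin : ∑ i, f i (mean x) ≤ ∑ i, (f i (x i) + ⟪h i, x i⟫)
      + ∑ i, ⟪heteroGrad g (mean x) i - h i, x i - mean x⟫ := by
    have hexp : ∀ i, ⟪heteroGrad g (mean x) i - h i, x i - mean x⟫
        = ⟪mean (fun j => g j (mean x)), x i - mean x⟫ - ⟪g i (mean x), x i - mean x⟫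
          - ⟪h i, x i⟫ + ⟪h i, mean x⟫ := fun i => by
      simp only [heteroGrad, inner_sub_left, inner_sub_right]; ring
    have hsum := sum_le_sum fun i (_ : i ∈ univ) => hconv i (x i) (mean x)
    simp only [hexp, sum_add_distrib, sum_sub_distrib, hG, hH] at hsum ⊢
    linarith
  have hyoung : ∑ i, ⟪heteroGrad g (mean x) i - h i, x i - mean x⟫
      ≤ ∑ i, (‖h i - heteroGrad g (mean x) i‖ ^ 2 / (4 * δ) + δ * ‖x i - mean x‖ ^ 2) := by
    gcongr with i
    rw [norm_sub_rev]
    exact real_inner_le_div_add_mul_sq hδ _ _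
  rw [sum_add_distrib, ← sum_div, ← mul_sum] at hyoung
  linarith

lemma sum_norm_gossip_tracking_sub_sq_le {W : Matrix (Fin n) (Fin n) ℝ} {ρ : ℝ}
    (hW : ∀ z : Fin n → E,
      ∑ i, ‖(∑ j, W i j • z j) - mean z‖ ^ 2 ≤ ρ ^ 2 * ∑ i, ‖z i - mean z‖ ^ 2)
    {h : Fin n → E} (hh : ∑ i, h i = 0) (y : Fin n → E) (c : E) :
    ∑ i, ‖(∑ j, W i j • (h j + g j (y j))) - g i (y i) - heteroGrad g c i‖ ^ 2
      ≤ 4 * ρ ^ 2 * ∑ i, ‖h i - heteroGrad g c i‖ ^ 2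
        + (4 * ρ ^ 2 + 2) * ∑ i, ‖g i (y i) - g i c‖ ^ 2 := by
  -- Since `∑ h = 0`, the summand splits into the gossip deviation of `z` and the centred `u`.
  set z : Fin n → E := fun j => h j + g j (y j)
  set u : Fin n → E := fun i => g i (y i) - g i c
  have hmz : mean z = mean (fun i => g i (y i)) := by
    rw [mean_add, mean, hh, smul_zero, zero_add]
  have hz : ∑ i, ‖z i - mean z‖ ^ 2
      ≤ 2 * ∑ i, ‖h i - heteroGrad g c i‖ ^ 2 + 2 * ∑ i, ‖u i‖ ^ 2 := by
    calc ∑ i, ‖z i - mean z‖ ^ 2 ≤ ∑ i, ‖z i - mean (fun j => g j c)‖ ^ 2 :=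
          sum_norm_sub_mean_sq_le _ _
      _ ≤ ∑ i, 2 * (‖h i - heteroGrad g c i‖ ^ 2 + ‖u i‖ ^ 2) := by
          gcongr with i
          have hsplit : z i - mean (fun j => g j c) = (h i - heteroGrad g c i) + u i := by
            simp only [z, u, heteroGrad]
            abel
          rw [hsplit]
          exact norm_add_sq_le_two_mul _ _
      _ = _ := by rw [← mul_sum, sum_add_distrib, mul_add]
  have hu : ∑ i, ‖u i - mean u‖ ^ 2 ≤ ∑ i, ‖u i‖ ^ 2 := by
    simpa using sum_norm_sub_mean_sq_le u 0
  calc ∑ i, ‖(∑ j, W i j • z j) - g i (y i) - heteroGrad g c i‖ ^ 2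
      = ∑ i, ‖((∑ j, W i j • z j) - mean z) - (u i - mean u)‖ ^ 2 := by
        congr! 3 with i
        simp only [u, mean_sub, hmz, heteroGrad]
        abel
    _ ≤ ∑ i, 2 * (‖(∑ j, W i j • z j) - mean z‖ ^ 2 + ‖u i - mean u‖ ^ 2) := by
        gcongr with i
        exact norm_sub_sq_le_two_mul _ _
    _ ≤ 2 * (ρ ^ 2 * ∑ i, ‖z i - mean z‖ ^ 2) + 2 * ∑ i, ‖u i‖ ^ 2 := by
        rw [← mul_sum, sum_add_distrib]
        linarith [hW z]
    _ ≤ _ := by nlinarith [sq_nonneg ρ]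

end

lemma pdo_parameter_bounds {μ L δ ρ : ℝ} (hL : 0 < L) (hδ : 0 < δ) (hδL : δ ≤ L)
    (hμL : μ ≤ L) (hρ0 : 0 ≤ ρ) (hρ : ρ ≤ δ / (6 * L)) :
    36 * (L ^ 2 * ρ ^ 2) ≤ δ ^ 2 ∧ ρ ^ 2 ≤ 1 / 36 ∧ (1 + μ / (4 * δ)) * ρ ^ 2 ≤ 1 / 16 := by
  have hLρ : 6 * L * ρ ≤ δ := by rwa [le_div_iff₀ (by positivity), mul_comm] at hρ
  have hρ6 : ρ ≤ 1 / 6 := by nlinarith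
  have hμρ : μ * ρ ^ 2 / (4 * δ) ≤ 1 / 144 := by
    rw [div_le_iff₀ (by positivity)]
    nlinarith [mul_le_mul_of_nonneg_right hμL (sq_nonneg ρ)]
  refine ⟨by nlinarith [mul_le_mul hLρ hLρ (by positivity) hδ.le],
    by nlinarith [mul_le_mul hρ6 hρ6 hρ0 (by norm_num)], ?_⟩
  rw [add_mul, one_mul, div_mul_eq_mul_div]
  nlinarith [mul_le_mul hρ6 hρ6 hρ0 (by norm_num)]

lemma one_round_le_of_estimates {μ δ L ρ k fMean prox firstOrder fStar step consHalf consNext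
      distMean distPrev errPrev errHalf errNext drift : ℝ}
    (hδ : 0 < δ) (hμ : 0 ≤ μ) (hLρ : 36 * (L ^ 2 * ρ ^ 2) ≤ δ ^ 2) (hρ : ρ ^ 2 ≤ 1 / 36)
    (hmρ : (1 + μ / (4 * δ)) * ρ ^ 2 ≤ 1 / 16) (hconsHalf : 0 ≤ consHalf)
    (herrHalf₀ : 0 ≤ errHalf)
    (hprox : prox + firstOrder + 4 * δ / 2 * step
        + (μ + 4 * δ) / 2 * (consHalf + k * distMean)
      ≤ fStar + 4 * δ / 2 * distPrev)
    (hfMean : fMean ≤ prox + errHalf / (4 * δ) + δ * consHalf)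
    (herrHalf : errHalf ≤ 2 * errPrev + 2 * (δ ^ 2 * step))
    (herrNext : errNext ≤ 4 * ρ ^ 2 * errHalf + (4 * ρ ^ 2 + 2) * drift)
    (hdrift : drift ≤ L ^ 2 * consNext) (hgossip : consNext ≤ ρ ^ 2 * consHalf) :
    fMean + (1 + μ / (4 * δ)) * (2 * δ * (consNext + k * distMean))
        + 1 / δ * (1 + μ / (4 * δ)) * errNext + δ * step + firstOrder
      ≤ fStar + 2 * δ * distPrev + 1 / δ * errPrev := by
  set m := 1 + μ / (4 * δ) with hm
  have hm1 : 1 ≤ m := le_add_of_nonneg_right (by positivity)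
  have h2δm : 2 * δ * m = (μ + 4 * δ) / 2 := by rw [hm]; field_simp; ring
  have hmconsHalf : 0 ≤ δ * (m * consHalf) := by positivity
  have hconsNext : δ * (m * consNext) ≤ δ * (m * consHalf) / 36 := by
    have := mul_le_mul_of_nonneg_left hgossip (by positivity : 0 ≤ δ * m)
    nlinarith [mul_le_mul_of_nonneg_left hρ hmconsHalf]
  have hdrift' : (4 * ρ ^ 2 + 2) * drift ≤ δ ^ 2 * consHalf / 12 := by
    have hdrift' : drift ≤ L ^ 2 * ρ ^ 2 * consHalf := by
      nlinarith [mul_le_mul_of_nonneg_left hgossip (sq_nonneg L)]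
    nlinarith [mul_le_mul_of_nonneg_left hdrift' (by positivity : (0 : ℝ) ≤ 4 * ρ ^ 2 + 2),
      mul_le_mul_of_nonneg_right hρ (by positivity : 0 ≤ L ^ 2 * ρ ^ 2 * consHalf),
      mul_le_mul_of_nonneg_right hLρ hconsHalf]
  have herrNext' :
      1 / δ * m * errNext ≤ errHalf / (4 * δ) + δ * (m * consHalf) / 12 := by
    have hm_errNext : m * errNext ≤ errHalf / 4 + m * (δ ^ 2 * consHalf) / 12 := by
      nlinarith [mul_le_mul_of_nonneg_left herrNext (by positivity : 0 ≤ m),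
        mul_le_mul_of_nonneg_right hmρ herrHalf₀,
        mul_le_mul_of_nonneg_left hdrift' (by positivity : 0 ≤ m)]
    calc 1 / δ * m * errNext
        ≤ 1 / δ * (errHalf / 4 + m * (δ ^ 2 * consHalf) / 12) := by
          rw [mul_assoc]; gcongr
      _ = errHalf / (4 * δ) + δ * (m * consHalf) / 12 := by field_simp
  have herrHalf' : errHalf / (4 * δ) ≤ 1 / δ * errPrev / 2 + δ * step / 2 := by
    rw [div_le_iff₀ (by positivity)]
    field_simp
    nlinarith
  have hsplit_next : m * (2 * δ * (consNext + k * distMean))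
      = 2 * δ * (m * consNext) + (μ + 4 * δ) / 2 * (k * distMean) := by
    rw [← h2δm]; ring
  have hsplit_half : (μ + 4 * δ) / 2 * (consHalf + k * distMean)
      = 2 * δ * (m * consHalf) + (μ + 4 * δ) / 2 * (k * distMean) := by
    rw [← h2δm]; ring
  have hconsHalf' : δ * consHalf ≤ δ * (m * consHalf) := by nlinarith
  linarith

theorem stmt_6_general (d n : ℕ)
    (f : Fin n → Vec d → ℝ) (g : Fin n → Vec d → Vec d)
    (μ L δ ρ : ℝ) (hμ : 0 ≤ μ) (hL : 0 < L) (hδ : 0 < δ)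
    (hδL : δ ≤ L) (hμL : μ ≤ L)
    (hρ0 : 0 < ρ) (hρle : ρ ≤ δ / (6 * L))
    (hsc : ∀ i (x y : Vec d),
      f i y + ⟪g i y, x - y⟫ + μ / 2 * ‖x - y‖ ^ 2 ≤ f i x)
    (hsmooth : ∀ i (x y : Vec d), ‖g i x - g i y‖ ≤ L * ‖x - y‖)
    (hsim : ∀ x y : Vec d,
      (1 / (n : ℝ)) * ∑ i, ‖(((1 / (n : ℝ)) • ∑ j, g j x) - g i x)
          - (((1 / (n : ℝ)) • ∑ j, g j y) - g i y)‖ ^ 2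
        ≤ δ ^ 2 * ‖x - y‖ ^ 2)
    (W : Matrix (Fin n) (Fin n) ℝ)
    (hWcol : ∀ j, ∑ i, W i j = 1)
    (hWgap : ∀ z : Fin n → Vec d,
      ∑ i, ‖(∑ j, W i j • z j) - (1 / (n : ℝ)) • ∑ k, z k‖ ^ 2
        ≤ ρ ^ 2 * ∑ i, ‖z i - (1 / (n : ℝ)) • ∑ k, z k‖ ^ 2)
    (fbar : Vec d → ℝ) (hfbar : ∀ z, fbar z = (1 / (n : ℝ)) * ∑ i, f i z)
    (xstar : Vec d)
    (xr hr xhalf xnext hnext : Fin n → Vec d)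
    (hsum0 : ∑ i, hr i = 0)
    (hxnext : ∀ i, xnext i = ∑ j, W i j • xhalf j)
    (hhnext : ∀ i, hnext i
      = (∑ j, W i j • (hr j + g j (xnext j))) - g i (xnext i))
    (xbarr xbarnext : Vec d)
    (hxbarr : xbarr = (1 / (n : ℝ)) • ∑ i, xr i)
    (hxbarnext : xbarnext = (1 / (n : ℝ)) • ∑ i, xnext i)
    (Errr Errnext : ℝ)
    (hErrr : Errr = (1 / (n : ℝ)) * ∑ i,
      ‖hr i - (((1 / (n : ℝ)) • ∑ j, g j xbarr) - g i xbarr)‖ ^ 2)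
    (hErrnext : Errnext = (1 / (n : ℝ)) * ∑ i,
      ‖hnext i - (((1 / (n : ℝ)) • ∑ j, g j xbarnext) - g i xbarnext)‖ ^ 2) :
    fbar xbarnext
      + (1 + μ / (4 * δ)) * ((2 * δ / (n : ℝ)) * ∑ i, ‖xnext i - xstar‖ ^ 2)
      + (1 / δ) * (1 + μ / (4 * δ)) * Errnext
      + (δ / (n : ℝ)) * ∑ i, ‖xhalf i - xr i‖ ^ 2
      + (1 / (n : ℝ)) * ∑ i,
          ⟪g i (xhalf i) + hr i + (4 * δ) • (xhalf i - xr i), xstar - xhalf i⟫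
    ≤ fbar xstar
      + (2 * δ / (n : ℝ)) * ∑ i, ‖xr i - xstar‖ ^ 2
      + (1 / δ) * Errr := by
  have hmean_next : mean xnext = mean xhalf := by
    rw [show xnext = _ from funext hxnext]
    exact mean_gossip hWcol xhalf
  obtain rfl : xbarnext = mean xhalf := hxbarnext.trans hmean_next
  obtain rfl : xbarr = mean xr := hxbarr
  obtain ⟨hLρ, hρ, hmρ⟩ := pdo_parameter_bounds hL hδ hδL hμL hρ0.le hρle
  have hprox := sum_prox_three_point hsc hsum0 xr xhalf xstar (4 * δ)
  rw [sum_norm_sub_sq_eq xhalf xstar] at hprox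
  have hfMean := sum_apply_mean_le hδ
    (fun i x y => (le_add_of_nonneg_right (by positivity)).trans (hsc i x y)) hsum0 xhalf
  have herrHalf := sum_norm_sub_heteroGrad_mean_sq_le hsim hr xhalf xr
  have herrNext := sum_norm_gossip_tracking_sub_sq_le (g := g) hWgap hsum0 xnext (mean xhalf)
  have hdrift := sum_norm_sub_sq_le_of_lipschitz hsmooth univ xnext (mean xhalf)
  have hgossip := hWgap xhalf
  simp only [← hxnext] at hgossip
  have key := one_round_le_of_estimates hδ hμ hLρ hρ hmρ (by positivity) (by positivity)
    hprox hfMean herrHalf herrNext hdrift hgossip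
  rw [hfbar, hfbar, hErrr, hErrnext, sum_norm_sub_sq_eq xnext xstar, hmean_next]
  simp only [hhnext, heteroGrad, mean] at key ⊢
  linear_combination (1 / (n : ℝ)) * key

/-- Simplified one-round recursion of PDO with `λ = 4δ`. -/
theorem stmt_6 (d n : ℕ) (hn : 1 ≤ n)
    (f : Fin n → Vec d → ℝ) (g : Fin n → Vec d → Vec d)
    (hdiff : ∀ i x, HasGradientAt (f i) (g i x) x)
    (μ L δ ρ : ℝ) (hμ : 0 ≤ μ) (hL : 0 < L) (hδ : 0 < δ)
    (hδL : δ ≤ L) (hμL : μ ≤ L)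
    (hρ0 : 0 < ρ) (hρ1 : ρ < 1) (hρle : ρ ≤ δ / (6 * L))
    (hsc : ∀ i (x y : Vec d),
      f i y + ⟪g i y, x - y⟫ + μ / 2 * ‖x - y‖ ^ 2 ≤ f i x)
    (hsmooth : ∀ i (x y : Vec d), ‖g i x - g i y‖ ≤ L * ‖x - y‖)
    (hsim : ∀ x y : Vec d,
      (1 / (n : ℝ)) * ∑ i, ‖(((1 / (n : ℝ)) • ∑ j, g j x) - g i x)
          - (((1 / (n : ℝ)) • ∑ j, g j y) - g i y)‖ ^ 2
        ≤ δ ^ 2 * ‖x - y‖ ^ 2)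
    (W : Matrix (Fin n) (Fin n) ℝ)
    (hWsymm : ∀ i j, W i j = W j i)
    (hWcol : ∀ j, ∑ i, W i j = 1)
    (hWgap : ∀ z : Fin n → Vec d,
      ∑ i, ‖(∑ j, W i j • z j) - (1 / (n : ℝ)) • ∑ k, z k‖ ^ 2
        ≤ ρ ^ 2 * ∑ i, ‖z i - (1 / (n : ℝ)) • ∑ k, z k‖ ^ 2)
    (fbar : Vec d → ℝ) (hfbar : ∀ z, fbar z = (1 / (n : ℝ)) * ∑ i, f i z)
    (xstar : Vec d) (hmin : ∀ z, fbar xstar ≤ fbar z)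
    (xr hr xhalf xnext hnext : Fin n → Vec d)
    (hsum0 : ∑ i, hr i = 0)
    (hxnext : ∀ i, xnext i = ∑ j, W i j • xhalf j)
    (hhnext : ∀ i, hnext i
      = (∑ j, W i j • (hr j + g j (xnext j))) - g i (xnext i))
    (xbarr xbarnext : Vec d)
    (hxbarr : xbarr = (1 / (n : ℝ)) • ∑ i, xr i)
    (hxbarnext : xbarnext = (1 / (n : ℝ)) • ∑ i, xnext i)
    (Errr Errnext : ℝ)
    (hErrr : Errr = (1 / (n : ℝ)) * ∑ i,
      ‖hr i - (((1 / (n : ℝ)) • ∑ j, g j xbarr) - g i xbarr)‖ ^ 2)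
    (hErrnext : Errnext = (1 / (n : ℝ)) * ∑ i,
      ‖hnext i - (((1 / (n : ℝ)) • ∑ j, g j xbarnext) - g i xbarnext)‖ ^ 2) :
    fbar xbarnext
      + (1 + μ / (4 * δ)) * ((2 * δ / (n : ℝ)) * ∑ i, ‖xnext i - xstar‖ ^ 2)
      + (1 / δ) * (1 + μ / (4 * δ)) * Errnext
      + (δ / (n : ℝ)) * ∑ i, ‖xhalf i - xr i‖ ^ 2
      + (1 / (n : ℝ)) * ∑ i,
          ⟪g i (xhalf i) + hr i + (4 * δ) • (xhalf i - xr i), xstar - xhalf i⟫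
    ≤ fbar xstar
      + (2 * δ / (n : ℝ)) * ∑ i, ‖xr i - xstar‖ ^ 2
      + (1 / δ) * Errr :=
  stmt_6_general d n f g μ L δ ρ hμ hL hδ hδL hμL hρ0 hρle hsc hsmooth hsim W hWcol hWgap fbar hfbar
    xstar xr hr xhalf xnext hnext hsum0 hxnext hhnext xbarr xbarnext hxbarr hxbarnext Errr Errnext
    hErrr hErrnext
end

section
/- (Lyapunov recursion of SPDO with λ = 20δ.) Assume each f_i is μ-strongly convex (μ ≥ 0) and L-smooth, the family is δ-similar with 0 < δ ≤ L and μ ≤ L; let W be a gossip matrix with spectral gap parameter ρ ∈ (0,1) with ρ ≤ δ/(5L); set λ := 20δ; let x⋆ be a minimizer of f. At round r, let v_i^{(r)}, h_i^{(r)} ∈ ℝ^d with ∑_{i=1}^n h_i^{(r)} = 0; define F_{i,r}(x) := f_i(x) + ⟨h_i^{(r)}, x⟩ + (λ/2)·‖x − v_i^{(r)}‖²; let x_i^{(r+1)} satisfy ∑_i ‖∇F_{i,r}(x_i^{(r+1)})‖² ≤ (λ²/10)·∑_i ‖v_i^{(r)} − x_i^{(r+1)}‖²; set v_i^{(r+1/2)}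 := (1/(μ+λ))·(μ·x_i^{(r+1)} + λ·v_i^{(r)} − ∇f_i(x_i^{(r+1)}) − h_i^{(r)}), v_i^{(r+1)} := ∑_j W_{ij}·v_j^{(r+1/2)}, and h_i^{(r+1)} := ∑_j W_{ij}·(h_j^{(r)} + ∇f_j(v_j^{(r+1)})) − ∇f_i(v_i^{(r+1)}). Then, with v̄^{(s)} := (1/n)·∑_i v_i^{(s)}, x̄^{(r+1)} := (1/n)·∑_i x_i^{(r+1)}, Ξ^{(s)} := (1/n)·∑_i ‖v_i^{(s)} − v̄^{(s)}‖², and E^{(s)} := (1/n)·∑_i ‖h_i^{(s)} − ∇h_i(v̄^{(s)})‖²: f(x⋆) + (10δ/n)·∑_i ‖v_i^{(r)} − x⋆‖² + (1/δ)·E^{(r)} + 2δ·Ξ^{(r)} ≥ f(x̄^{(r+1)}) + (1 + μ/(20δ))·[(10δ/n)·∑_i ‖v_i^{(r+1)} − x⋆‖² + (1/δ)·E^{(r+1)} + 2δ·Ξ^{(r+1)}]. -/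
open scoped BigOperators RealInnerProductSpace

section auxlemmas
variable {E : Type*} [NormedAddCommGroup E] [InnerProductSpace ℝ E] {n : ℕ}

lemma aux_two_sq (a b : E) : ‖a + b‖^2 ≤ 2*‖a‖^2 + 2*‖b‖^2 := by
  have h := norm_add_le a b
  nlinarith [sq_nonneg (‖a‖ - ‖b‖), norm_nonneg a, norm_nonneg b, norm_nonneg (a+b)]

lemma aux_two_sq_sub (a b : E) : ‖a - b‖^2 ≤ 2*‖a‖^2 + 2*‖b‖^2 := by
  have h := aux_two_sq a (-b)
  rw [sub_eq_add_neg]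
  simpa using h

lemma aux_three_sq (a b c : E) : ‖a + b + c‖^2 ≤ 3*(‖a‖^2 + ‖b‖^2 + ‖c‖^2) := by
  have h1 := norm_add_le (a + b) c
  have h2 := norm_add_le a b
  nlinarith [sq_nonneg (‖a‖ - ‖b‖), sq_nonneg (‖a‖ - ‖c‖), sq_nonneg (‖b‖ - ‖c‖),
    norm_nonneg a, norm_nonneg b, norm_nonneg c, norm_nonneg (a+b), norm_nonneg (a+b+c)]

lemma aux_young4 (δ : ℝ) (a b : E) : -(‖a‖^2 + 4*δ^2*‖b‖^2) ≤ 4*δ*⟪a, b⟫ := by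
  have h : (0:ℝ) ≤ ‖a + (2*δ) • b‖^2 := sq_nonneg _
  rw [norm_add_sq_real, real_inner_smul_right, norm_smul, Real.norm_eq_abs, mul_pow, sq_abs] at h
  nlinarith [h]

lemma aux_sum_sub_mean (hn : 1 ≤ n) (z : Fin n → E) :
    ∑ i, (z i - (1/(n:ℝ)) • ∑ k, z k) = 0 := by
  have hn' : ((n:ℝ)) ≠ 0 := by positivity
  rw [Finset.sum_sub_distrib, Finset.sum_const, Finset.card_univ, Fintype.card_fin,
    sub_eq_zero]
  rw [← Nat.cast_smul_eq_nsmul ℝ, smul_smul]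
  rw [mul_one_div, div_self hn', one_smul]

lemma aux_sum_sq_split (hn : 1 ≤ n) (z : Fin n → E) (c : E) :
    ∑ i, ‖z i - c‖^2
      = ∑ i, ‖z i - (1/(n:ℝ)) • ∑ k, z k‖^2 + n * ‖(1/(n:ℝ)) • ∑ k, z k - c‖^2 := by
  set m := (1/(n:ℝ)) • ∑ k, z k with hm
  have key : ∀ i, ‖z i - c‖^2 = ‖z i - m‖^2 + 2*⟪z i - m, m - c⟫ + ‖m - c‖^2 := by
    intro i
    have : z i - c = (z i - m) + (m - c) := by abel
    rw [this, norm_add_sq_real]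
  rw [Finset.sum_congr rfl (fun i _ => key i)]
  rw [Finset.sum_add_distrib, Finset.sum_add_distrib]
  have hz := aux_sum_sub_mean hn z
  rw [← hm] at hz
  have h2 : ∑ x : Fin n, 2*⟪z x - m, m - c⟫ = 2*⟪∑ x, (z x - m), m - c⟫ := by
    rw [sum_inner, Finset.mul_sum]
  rw [h2, hz, inner_zero_left, mul_zero, add_zero, Finset.sum_const, Finset.card_univ,
    Fintype.card_fin, nsmul_eq_mul]

lemma aux_var_le (hn : 1 ≤ n) (z : Fin n → E) (c : E) :
    ∑ i, ‖z i - (1/(n:ℝ)) • ∑ k, z k‖^2 ≤ ∑ i, ‖z i - c‖^2 := by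
  rw [aux_sum_sq_split hn z c]
  have : (0:ℝ) ≤ n * ‖(1/(n:ℝ)) • ∑ k, z k - c‖^2 := by positivity
  linarith

lemma aux_meansq_le (hn : 1 ≤ n) (z : Fin n → E) (c : E) :
    (n:ℝ) * ‖(1/(n:ℝ)) • ∑ k, z k - c‖^2 ≤ ∑ i, ‖z i - c‖^2 := by
  rw [aux_sum_sq_split hn z c]
  have : (0:ℝ) ≤ ∑ i, ‖z i - (1/(n:ℝ)) • ∑ k, z k‖^2 :=
    Finset.sum_nonneg fun i _ => by positivity
  linarith

lemma aux_perA (μ δ : ℝ) (hμ : 0 ≤ μ) (hδ : 0 < δ)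
    (fx fs : ℝ) (gx h v x xs vh : E)
    (hvh : (μ+20*δ) • (xs - vh) = (μ+20*δ) • (xs - x) + (gx + h + (20*δ) • (x - v)))
    (hsc : fx + ⟪gx, xs - x⟫ + μ/2*‖xs - x‖^2 ≤ fs) :
    2*(μ+20*δ)*(fx + ⟪h, x⟫ + 10*δ*‖v - x‖^2) + (μ+20*δ)^2*‖xs - vh‖^2
      ≤ 2*(μ+20*δ)*(fs + ⟪h, xs⟫ + 10*δ*‖v - xs‖^2)
        + ‖gx + h + (20*δ) • (x - v)‖^2 := by
  set M := μ + 20*δ with hM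
  have hMpos : 0 < M := by positivity
  clear_value M
  have hC : (M^2)*‖xs - vh‖^2
      = M^2*‖xs - x‖^2
        + 2*M*(⟪gx, xs - x⟫ + ⟪h, xs - x⟫ + 20*δ*⟪xs - x, x - v⟫)
        + ‖gx + h + (20*δ) • (x - v)‖^2 := by
    have h1 : ‖M • (xs - vh)‖^2 = M^2 * ‖xs - vh‖^2 := by
      rw [norm_smul, Real.norm_eq_abs, mul_pow, sq_abs]
    have h2 : ‖M • (xs - x) + (gx + h + (20*δ) • (x - v))‖^2
        = M^2*‖xs - x‖^2 + 2*(M*⟪xs - x, gx + h + (20*δ) • (x - v)⟫)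
          + ‖gx + h + (20*δ) • (x - v)‖^2 := by
      rw [norm_add_sq_real, real_inner_smul_left, norm_smul, Real.norm_eq_abs, mul_pow, sq_abs]
    have h3 : ⟪xs - x, gx + h + (20*δ) • (x - v)⟫
        = ⟪gx, xs - x⟫ + ⟪h, xs - x⟫ + 20*δ*⟪xs - x, x - v⟫ := by
      rw [inner_add_right, inner_add_right, real_inner_smul_right,
        real_inner_comm (xs - x) gx, real_inner_comm (xs - x) h]
    rw [← h1, hvh, h2, h3]
    ring
  have hB : ‖v - xs‖^2 = ‖v - x‖^2 + 2*⟪xs - x, x - v⟫ + ‖xs - x‖^2 := by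
    have h4 : v - xs = (v - x) + (x - xs) := by abel
    have h5 : ⟪v - x, x - xs⟫ = ⟪xs - x, x - v⟫ := by
      rw [show (v - x : E) = -(x - v) by abel, show (x - xs : E) = -(xs - x) by abel,
        ← inner_neg_neg, neg_neg, neg_neg, real_inner_comm]
    rw [h4, norm_add_sq_real, h5, norm_sub_rev x xs]
  have hHS : ⟪h, xs⟫ = ⟪h, x⟫ + ⟪h, xs - x⟫ := by
    rw [inner_sub_right]; ring
  have hBmult : (20*δ*M)*‖v - xs‖^2
      = (20*δ*M)*(‖v - x‖^2 + 2*⟪xs - x, x - v⟫ + ‖xs - x‖^2) := by rw [hB]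
  have hslack : 0 ≤ 2*M*(fs - (fx + ⟪gx, xs - x⟫ + μ/2*‖xs - x‖^2)) := by
    have : 0 ≤ fs - (fx + ⟪gx, xs - x⟫ + μ/2*‖xs - x‖^2) := by linarith
    positivity
  have hHSmult : (2*M)*⟪h, xs⟫ = (2*M)*(⟪h, x⟫ + ⟪h, xs - x⟫) := by rw [hHS]
  have hM2N : M^2*‖xs - x‖^2 = (M*μ + 20*δ*M)*‖xs - x‖^2 := by rw [hM]; ring
  linarith [hC, hBmult, hslack, hHSmult, hM2N]

end auxlemmas

set_option maxHeartbeats 8000000 in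
/-- Lyapunov recursion of SPDO with `λ = 20δ`. -/
theorem stmt_10 (d n : ℕ) (hn : 1 ≤ n)
    (f : Fin n → Vec d → ℝ) (g : Fin n → Vec d → Vec d)
    (hdiff : ∀ i x, HasGradientAt (f i) (g i x) x)
    (μ L δ ρ : ℝ) (hμ : 0 ≤ μ) (hL : 0 < L) (hδ : 0 < δ)
    (hδL : δ ≤ L) (hμL : μ ≤ L)
    (hρ0 : 0 < ρ) (hρ1 : ρ < 1) (hρle : ρ ≤ δ / (5 * L))
    (hsc : ∀ i (x y : Vec d),
      f i y + ⟪g i y, x - y⟫ + μ / 2 * ‖x - y‖ ^ 2 ≤ f i x)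
    (hsmooth : ∀ i (x y : Vec d), ‖g i x - g i y‖ ≤ L * ‖x - y‖)
    (hsim : ∀ x y : Vec d,
      (1 / (n : ℝ)) * ∑ i, ‖(((1 / (n : ℝ)) • ∑ j, g j x) - g i x)
          - (((1 / (n : ℝ)) • ∑ j, g j y) - g i y)‖ ^ 2
        ≤ δ ^ 2 * ‖x - y‖ ^ 2)
    (W : Matrix (Fin n) (Fin n) ℝ)
    (hWsymm : ∀ i j, W i j = W j i)
    (hWcol : ∀ j, ∑ i, W i j = 1)
    (hWgap : ∀ z : Fin n → Vec d,
      ∑ i, ‖(∑ j, W i j • z j) - (1 / (n : ℝ)) • ∑ k, z k‖ ^ 2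
        ≤ ρ ^ 2 * ∑ i, ‖z i - (1 / (n : ℝ)) • ∑ k, z k‖ ^ 2)
    (fbar : Vec d → ℝ) (hfbar : ∀ z, fbar z = (1 / (n : ℝ)) * ∑ i, f i z)
    (xstar : Vec d) (hmin : ∀ z, fbar xstar ≤ fbar z)
    (vr hr xnext vhalf vnext hnext : Fin n → Vec d)
    (hsum0 : ∑ i, hr i = 0)
    (hsub : ∑ i, ‖g i (xnext i) + hr i + (20 * δ) • (xnext i - vr i)‖ ^ 2
      ≤ (20 * δ) ^ 2 / 10 * ∑ i, ‖vr i - xnext i‖ ^ 2)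
    (hvhalf : ∀ i, vhalf i
      = (μ + 20 * δ)⁻¹ • (μ • xnext i + (20 * δ) • vr i - g i (xnext i) - hr i))
    (hvnext : ∀ i, vnext i = ∑ j, W i j • vhalf j)
    (hhnext : ∀ i, hnext i
      = (∑ j, W i j • (hr j + g j (vnext j))) - g i (vnext i))
    (xbarnext vbarr vbarnext : Vec d)
    (hxbarnext : xbarnext = (1 / (n : ℝ)) • ∑ i, xnext i)
    (hvbarr : vbarr = (1 / (n : ℝ)) • ∑ i, vr i)
    (hvbarnext : vbarnext = (1 / (n : ℝ)) • ∑ i, vnext i)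
    (Errr Errnext Xir Xinext : ℝ)
    (hErrr : Errr = (1 / (n : ℝ)) * ∑ i,
      ‖hr i - (((1 / (n : ℝ)) • ∑ j, g j vbarr) - g i vbarr)‖ ^ 2)
    (hErrnext : Errnext = (1 / (n : ℝ)) * ∑ i,
      ‖hnext i - (((1 / (n : ℝ)) • ∑ j, g j vbarnext) - g i vbarnext)‖ ^ 2)
    (hXir : Xir = (1 / (n : ℝ)) * ∑ i, ‖vr i - vbarr‖ ^ 2)
    (hXinext : Xinext = (1 / (n : ℝ)) * ∑ i, ‖vnext i - vbarnext‖ ^ 2) :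
    fbar xbarnext
      + (1 + μ / (20 * δ)) *
          ((10 * δ / (n : ℝ)) * ∑ i, ‖vnext i - xstar‖ ^ 2
            + (1 / δ) * Errnext + 2 * δ * Xinext)
    ≤ fbar xstar
      + (10 * δ / (n : ℝ)) * ∑ i, ‖vr i - xstar‖ ^ 2
      + (1 / δ) * Errr
      + 2 * δ * Xir := by
  have hn0 : (0:ℝ) < (n:ℝ) := by exact_mod_cast hn
  have hnne : ((n:ℝ)) ≠ 0 := ne_of_gt hn0
  have hMpos : (0:ℝ) < μ + 20*δ := by positivity
  have hMne : (μ + 20*δ) ≠ 0 := ne_of_gt hMpos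
  have hncancel : ∀ x : ℝ, (n:ℝ)*((1/(n:ℝ))*x) = x := by
    intro x; field_simp
  -- squared smoothness
  have hsm2 : ∀ i (a b : Vec d), ‖g i a - g i b‖^2 ≤ L^2*‖a - b‖^2 := by
    intro i a b
    have h := hsmooth i a b
    nlinarith [norm_nonneg (g i a - g i b), norm_nonneg (a - b), hL.le,
      mul_le_mul h h (norm_nonneg _) (by positivity)]
  -- spectral constants
  have hρsq : ρ^2 ≤ δ^2/(25*L^2) := by
    have h := mul_le_mul hρle hρle hρ0.le (le_trans hρ0.le hρle)
    have he : δ/(5*L)*(δ/(5*L)) = δ^2/(25*L^2) := by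
      field_simp; ring
    calc ρ^2 = ρ*ρ := sq ρ
      _ ≤ δ/(5*L)*(δ/(5*L)) := h
      _ = δ^2/(25*L^2) := he
  have hρL2 : ρ^2*L^2 ≤ δ^2/25 := by
    have h := mul_le_mul_of_nonneg_right hρsq (sq_nonneg L)
    have he : δ^2/(25*L^2)*L^2 = δ^2/25 := by field_simp
    linarith [he ▸ h]
  have hρ125 : ρ^2 ≤ 1/25 := by
    have h : δ^2/(25*L^2) ≤ 1/25 := by
      rw [div_le_div_iff₀ (by positivity) (by norm_num)]
      nlinarith [hδL, hδ]
    linarith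
  have hMρ : (μ+20*δ)*ρ^2 ≤ (21/25)*δ := by
    have h1 : (μ+20*δ)*ρ^2 ≤ 21*L*ρ^2 := by nlinarith [sq_nonneg ρ, hμL, hδL]
    have h2 : 21*L*ρ^2 ≤ 21*L*(δ^2/(25*L^2)) :=
      mul_le_mul_of_nonneg_left hρsq (by positivity)
    have h3 : 21*L*(δ^2/(25*L^2)) = 21*δ^2/(25*L) := by field_simp
    have h4 : 21*δ^2/(25*L) ≤ (21/25)*δ := by
      rw [div_le_iff₀ (by positivity)]
      nlinarith [hδL, hδ]
    linarith [h3 ▸ h2]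
  -- p-sum bound
  have hsub' : ∑ i, ‖g i (xnext i) + hr i + (20 * δ) • (xnext i - vr i)‖^2
      ≤ 40*δ^2*∑ i, ‖vr i - xnext i‖^2 := by
    calc ∑ i, ‖g i (xnext i) + hr i + (20 * δ) • (xnext i - vr i)‖^2
        ≤ (20 * δ)^2/10 * ∑ i, ‖vr i - xnext i‖^2 := hsub
      _ = 40*δ^2*∑ i, ‖vr i - xnext i‖^2 := by ring
  -- vhalf identities
  have hvh : ∀ i, (μ+20*δ) • (xstar - vhalf i)
      = (μ+20*δ) • (xstar - xnext i)
        + (g i (xnext i) + hr i + (20 * δ) • (xnext i - vr i)) := by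
    intro i
    rw [hvhalf i, smul_sub]
    rw [show (μ + 20 * δ) • ((μ + 20 * δ)⁻¹ • (μ • xnext i + (20 * δ) • vr i - g i (xnext i) - hr i)) = (μ • xnext i + (20 * δ) • vr i - g i (xnext i) - hr i) from smul_inv_smul₀ hMne _]
    module
  have hvv : ∀ i, (μ+20*δ) • (vhalf i - vr i)
      = (μ+20*δ) • (xnext i - vr i)
        - (g i (xnext i) + hr i + (20 * δ) • (xnext i - vr i)) := by
    intro i
    rw [hvhalf i, smul_sub]
    rw [show (μ + 20 * δ) • ((μ + 20 * δ)⁻¹ • (μ • xnext i + (20 * δ) • vr i - g i (xnext i) - hr i)) = (μ • xnext i + (20 * δ) • vr i - g i (xnext i) - hr i) from smul_inv_smul₀ hMne _]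
    module
  -- per node strong convexity inequality
  have keyA : ∀ i, 2*(μ+20*δ)*(f i (xnext i) + ⟪hr i, xnext i⟫ + 10*δ*‖vr i - xnext i‖^2)
      + (μ+20*δ)^2*‖xstar - vhalf i‖^2
      ≤ 2*(μ+20*δ)*(f i xstar + ⟪hr i, xstar⟫ + 10*δ*‖vr i - xstar‖^2)
        + ‖g i (xnext i) + hr i + (20 * δ) • (xnext i - vr i)‖^2 := by
    intro i
    exact aux_perA μ δ hμ hδ _ _ _ _ _ _ _ _ (hvh i) (hsc i xstar (xnext i))
  have hinner0 : ∑ i, ⟪hr i, xstar⟫ = (0:ℝ) := by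
    rw [← sum_inner, hsum0, inner_zero_left]
  have hK1 : 2*(μ+20*δ)*((∑ i, f i (xnext i)) + (∑ i, ⟪hr i, xnext i⟫)
        + 10*δ*∑ i, ‖vr i - xnext i‖^2)
      + (μ+20*δ)^2*∑ i, ‖xstar - vhalf i‖^2
      ≤ 2*(μ+20*δ)*((∑ i, f i xstar) + 10*δ*∑ i, ‖vr i - xstar‖^2)
        + ∑ i, ‖g i (xnext i) + hr i + (20 * δ) • (xnext i - vr i)‖^2 := by
    have hs := Finset.sum_le_sum (fun i (_ : i ∈ Finset.univ) => keyA i)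
    have e1 : ∑ i, (2*(μ+20*δ)*(f i (xnext i) + ⟪hr i, xnext i⟫ + 10*δ*‖vr i - xnext i‖^2)
          + (μ+20*δ)^2*‖xstar - vhalf i‖^2)
        = 2*(μ+20*δ)*((∑ i, f i (xnext i)) + (∑ i, ⟪hr i, xnext i⟫)
            + 10*δ*∑ i, ‖vr i - xnext i‖^2)
          + (μ+20*δ)^2*∑ i, ‖xstar - vhalf i‖^2 := by
      simp only [mul_add, Finset.sum_add_distrib, ← Finset.mul_sum]
    have e2 : ∑ i, (2*(μ+20*δ)*(f i xstar + ⟪hr i, xstar⟫ + 10*δ*‖vr i - xstar‖^2)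
          + ‖g i (xnext i) + hr i + (20 * δ) • (xnext i - vr i)‖^2)
        = 2*(μ+20*δ)*((∑ i, f i xstar) + 10*δ*∑ i, ‖vr i - xstar‖^2)
          + ∑ i, ‖g i (xnext i) + hr i + (20 * δ) • (xnext i - vr i)‖^2 := by
      simp only [mul_add, Finset.sum_add_distrib, ← Finset.mul_sum]
      rw [hinner0]
      ring
    rw [e1, e2] at hs
    exact hs
  -- step B
  have hxmean : ∑ i, (xnext i - xbarnext) = 0 := by
    have h := aux_sum_sub_mean hn xnext
    rw [← hxbarnext] at h
    exact h
  have keyB : ∀ i, f i xbarnext + ⟪hr i, xbarnext⟫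
      + ⟪(1/(n:ℝ)) • ∑ j, g j xbarnext, xnext i - xbarnext⟫
      + ⟪hr i - ((1/(n:ℝ)) • ∑ j, g j xbarnext - g i xbarnext), xnext i - xbarnext⟫
      ≤ f i (xnext i) + ⟪hr i, xnext i⟫ := by
    intro i
    have h1 := hsc i (xnext i) xbarnext
    have h2 : ⟪hr i, xnext i - xbarnext⟫ = ⟪hr i, xnext i⟫ - ⟪hr i, xbarnext⟫ :=
      inner_sub_right _ _ _
    have h3 : ⟪hr i - ((1/(n:ℝ)) • ∑ j, g j xbarnext - g i xbarnext), xnext i - xbarnext⟫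
        = ⟪hr i, xnext i - xbarnext⟫
          - (⟪(1/(n:ℝ)) • ∑ j, g j xbarnext, xnext i - xbarnext⟫
             - ⟪g i xbarnext, xnext i - xbarnext⟫) := by
      rw [inner_sub_left, inner_sub_left]
    have h4 : (0:ℝ) ≤ μ/2*‖xnext i - xbarnext‖^2 := by positivity
    have h5 : μ / 2 * ‖xnext i - xbarnext‖ ^ 2 = μ/2*‖xnext i - xbarnext‖^2 := rfl
    linarith [h1, h2, h3, h4]
  have hB1 : (∑ i, f i xbarnext)
      + ∑ i, ⟪hr i - ((1/(n:ℝ)) • ∑ j, g j xbarnext - g i xbarnext), xnext i - xbarnext⟫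
      ≤ (∑ i, f i (xnext i)) + ∑ i, ⟪hr i, xnext i⟫ := by
    have hs := Finset.sum_le_sum (fun i (_ : i ∈ Finset.univ) => keyB i)
    simp only [Finset.sum_add_distrib] at hs
    have z1 : ∑ i, ⟪hr i, xbarnext⟫ = (0:ℝ) := by
      rw [← sum_inner, hsum0, inner_zero_left]
    have z2 : ∑ i, ⟪(1/(n:ℝ)) • ∑ j, g j xbarnext, xnext i - xbarnext⟫ = (0:ℝ) := by
      rw [← inner_sum, hxmean, inner_zero_right]
    rw [z1, z2] at hs
    linarith [hs]
  have hB2 : -( (∑ i, ‖hr i - ((1/(n:ℝ)) • ∑ j, g j xbarnext - g i xbarnext)‖^2)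
        + 4*δ^2*(∑ i, ‖xnext i - xbarnext‖^2))
      ≤ 4*δ*∑ i, ⟪hr i - ((1/(n:ℝ)) • ∑ j, g j xbarnext - g i xbarnext), xnext i - xbarnext⟫ := by
    have hs := Finset.sum_le_sum (fun i (_ : i ∈ Finset.univ) =>
      aux_young4 δ (hr i - ((1/(n:ℝ)) • ∑ j, g j xbarnext - g i xbarnext))
        (xnext i - xbarnext))
    simp only [Finset.sum_neg_distrib, Finset.sum_add_distrib, ← Finset.mul_sum] at hs
    linarith [hs]
  -- A-error transfer bound
  have hvxbar : vbarr - xbarnext = (1/(n:ℝ)) • ∑ i, (vr i - xnext i) := by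
    rw [hvbarr, hxbarnext, ← smul_sub, Finset.sum_sub_distrib]
  have hvxS : (n:ℝ)*‖vbarr - xbarnext‖^2 ≤ ∑ i, ‖vr i - xnext i‖^2 := by
    have h := aux_meansq_le hn (fun i => vr i - xnext i) 0
    simp only [sub_zero] at h
    rw [← hvxbar] at h
    exact h
  have hK4 : ∑ i, ‖hr i - ((1/(n:ℝ)) • ∑ j, g j xbarnext - g i xbarnext)‖^2
      ≤ 2*(∑ i, ‖hr i - ((1/(n:ℝ)) • ∑ j, g j vbarr - g i vbarr)‖^2)
        + 2*(δ^2*∑ i, ‖vr i - xnext i‖^2) := by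
    have hs : ∑ i, ‖hr i - ((1/(n:ℝ)) • ∑ j, g j xbarnext - g i xbarnext)‖^2
        ≤ ∑ i, (2*‖hr i - ((1/(n:ℝ)) • ∑ j, g j vbarr - g i vbarr)‖^2
            + 2*‖((1/(n:ℝ)) • ∑ j, g j vbarr - g i vbarr)
                - ((1/(n:ℝ)) • ∑ j, g j xbarnext - g i xbarnext)‖^2) := by
      refine Finset.sum_le_sum (fun i _ => ?_)
      rw [show hr i - ((1/(n:ℝ)) • ∑ j, g j xbarnext - g i xbarnext)
          = (hr i - ((1/(n:ℝ)) • ∑ j, g j vbarr - g i vbarr))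
            + (((1/(n:ℝ)) • ∑ j, g j vbarr - g i vbarr)
               - ((1/(n:ℝ)) • ∑ j, g j xbarnext - g i xbarnext)) from by abel]
      exact aux_two_sq _ _
    have hsim'' : ∑ i, ‖((1/(n:ℝ)) • ∑ j, g j vbarr - g i vbarr)
        - ((1/(n:ℝ)) • ∑ j, g j xbarnext - g i xbarnext)‖^2
        ≤ (n:ℝ)*(δ^2*‖vbarr - xbarnext‖^2) := by
      have h := mul_le_mul_of_nonneg_left (hsim vbarr xbarnext) (le_of_lt hn0)
      rw [hncancel] at h
      exact h
    have h5 : (n:ℝ)*(δ^2*‖vbarr - xbarnext‖^2) ≤ δ^2*∑ i, ‖vr i - xnext i‖^2 := by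
      have h6 := mul_le_mul_of_nonneg_left hvxS (sq_nonneg δ)
      linarith [h6]
    have he : ∑ i, (2*‖hr i - ((1/(n:ℝ)) • ∑ j, g j vbarr - g i vbarr)‖^2
            + 2*‖((1/(n:ℝ)) • ∑ j, g j vbarr - g i vbarr)
                - ((1/(n:ℝ)) • ∑ j, g j xbarnext - g i xbarnext)‖^2)
        = 2*(∑ i, ‖hr i - ((1/(n:ℝ)) • ∑ j, g j vbarr - g i vbarr)‖^2)
          + 2*(∑ i, ‖((1/(n:ℝ)) • ∑ j, g j vbarr - g i vbarr)
                - ((1/(n:ℝ)) • ∑ j, g j xbarnext - g i xbarnext)‖^2) := by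
      simp only [Finset.sum_add_distrib, ← Finset.mul_sum]
    linarith [hs, hsim'', h5, he]
  have hK5 : ∑ i, ‖xnext i - xbarnext‖^2
      ≤ 2*(∑ i, ‖vr i - xnext i‖^2) + 2*(∑ i, ‖vr i - vbarr‖^2) := by
    have h1 : ∑ i, ‖xnext i - xbarnext‖^2 ≤ ∑ i, ‖xnext i - vbarr‖^2 := by
      have h := aux_var_le hn xnext vbarr
      rw [← hxbarnext] at h
      exact h
    have h2 : ∑ i, ‖xnext i - vbarr‖^2
        ≤ ∑ i, (2*‖vr i - xnext i‖^2 + 2*‖vr i - vbarr‖^2) := by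
      refine Finset.sum_le_sum (fun i _ => ?_)
      rw [show xnext i - vbarr = (xnext i - vr i) + (vr i - vbarr) from by abel]
      calc ‖(xnext i - vr i) + (vr i - vbarr)‖^2
          ≤ 2*‖xnext i - vr i‖^2 + 2*‖vr i - vbarr‖^2 := aux_two_sq _ _
        _ = 2*‖vr i - xnext i‖^2 + 2*‖vr i - vbarr‖^2 := by rw [norm_sub_rev (xnext i) (vr i)]
    have h3 : ∑ i, (2*‖vr i - xnext i‖^2 + 2*‖vr i - vbarr‖^2)
        = 2*(∑ i, ‖vr i - xnext i‖^2) + 2*(∑ i, ‖vr i - vbarr‖^2) := by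
      simp only [Finset.sum_add_distrib, ← Finset.mul_sum]
    linarith
  -- gossip facts
  have hsumhalf : ∑ i, vnext i = ∑ j, vhalf j := by
    simp only [hvnext]
    rw [Finset.sum_comm]
    simp only [← Finset.sum_smul, hWcol, one_smul]
  have hmhalf : vbarnext = (1/(n:ℝ)) • ∑ k, vhalf k := by
    rw [hvbarnext, hsumhalf]
  have G1 : ∑ i, ‖vnext i - vbarnext‖^2 ≤ ρ^2*∑ i, ‖vhalf i - vbarnext‖^2 := by
    have h := hWgap vhalf
    rw [← hmhalf] at h
    simp only [← hvnext] at h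
    exact h
  have G2 : ∑ i, ‖vnext i - xstar‖^2
      = (∑ i, ‖vnext i - vbarnext‖^2) + (n:ℝ)*‖vbarnext - xstar‖^2 := by
    have h := aux_sum_sq_split hn vnext xstar
    rw [← hvbarnext] at h
    exact h
  have G3 : ∑ i, ‖xstar - vhalf i‖^2
      = (∑ i, ‖vhalf i - vbarnext‖^2) + (n:ℝ)*‖vbarnext - xstar‖^2 := by
    have h := aux_sum_sq_split hn vhalf xstar
    rw [← hmhalf] at h
    have hrev : ∑ i, ‖xstar - vhalf i‖^2 = ∑ i, ‖vhalf i - xstar‖^2 := by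
      refine Finset.sum_congr rfl (fun i _ => ?_)
      rw [norm_sub_rev]
    rw [hrev, h]
  -- R bound
  have hK11 : ∑ i, ‖vhalf i - vr i‖^2 ≤ (11/5)*∑ i, ‖vr i - xnext i‖^2 := by
    have hper : ∀ i, (μ+20*δ)^2*‖vhalf i - vr i‖^2
        ≤ 2*((μ+20*δ)^2*‖vr i - xnext i‖^2)
          + 2*‖g i (xnext i) + hr i + (20 * δ) • (xnext i - vr i)‖^2 := by
      intro i
      have h1 : ‖(μ+20*δ) • (vhalf i - vr i)‖^2 = (μ+20*δ)^2*‖vhalf i - vr i‖^2 := by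
        rw [norm_smul, Real.norm_eq_abs, mul_pow, sq_abs]
      have h2 : ‖(μ+20*δ) • (xnext i - vr i)‖^2 = (μ+20*δ)^2*‖xnext i - vr i‖^2 := by
        rw [norm_smul, Real.norm_eq_abs, mul_pow, sq_abs]
      have h3 := aux_two_sq_sub ((μ+20*δ) • (xnext i - vr i))
        (g i (xnext i) + hr i + (20 * δ) • (xnext i - vr i))
      rw [← hvv i, h1, h2] at h3
      rw [norm_sub_rev (vr i) (xnext i)]
      linarith [h3]
    have hs := Finset.sum_le_sum (fun i (_ : i ∈ Finset.univ) => hper i)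
    have e1 : ∑ i, ((μ+20*δ)^2*‖vhalf i - vr i‖^2)
        = (μ+20*δ)^2*∑ i, ‖vhalf i - vr i‖^2 := by
      rw [← Finset.mul_sum]
    have e2 : ∑ i, (2*((μ+20*δ)^2*‖vr i - xnext i‖^2)
          + 2*‖g i (xnext i) + hr i + (20 * δ) • (xnext i - vr i)‖^2)
        = 2*((μ+20*δ)^2*∑ i, ‖vr i - xnext i‖^2)
          + 2*(∑ i, ‖g i (xnext i) + hr i + (20 * δ) • (xnext i - vr i)‖^2) := by
      simp only [Finset.sum_add_distrib, ← Finset.mul_sum]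
    rw [e1, e2] at hs
    have hS0 : (0:ℝ) ≤ ∑ i, ‖vr i - xnext i‖^2 :=
      Finset.sum_nonneg (fun i _ => by positivity)
    refine le_of_mul_le_mul_left ?_ (show (0:ℝ) < (μ+20*δ)^2 by positivity)
    nlinarith [hs, hsub', hS0, mul_nonneg (mul_nonneg hμ hμ) hS0,
      mul_nonneg (mul_nonneg hμ hδ.le) hS0]
  have hK7 : (n:ℝ)*‖vbarnext - vbarr‖^2 ≤ ∑ i, ‖vhalf i - vr i‖^2 := by
    have hd : vbarnext - vbarr = (1/(n:ℝ)) • ∑ i, (vhalf i - vr i) := by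
      rw [hmhalf, hvbarr, ← smul_sub, Finset.sum_sub_distrib]
    have h := aux_meansq_le hn (fun i => vhalf i - vr i) 0
    simp only [sub_zero] at h
    rw [← hd] at h
    exact h
  -- E-next bounds
  have husum' : ∑ k, (hr k + g k (vnext k)) = ∑ k, g k (vnext k) := by
    rw [Finset.sum_add_distrib, hsum0, zero_add]
  have hAgap : ∑ i, ‖(∑ j, W i j • (hr j + g j (vnext j)))
      - (1/(n:ℝ)) • ∑ k, (hr k + g k (vnext k))‖^2
      ≤ ρ^2*∑ i, ‖(hr i + g i (vnext i)) - (1/(n:ℝ)) • ∑ k, (hr k + g k (vnext k))‖^2 :=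
    hWgap (fun k => hr k + g k (vnext k))
  have hCeq : (1/(n:ℝ)) • ∑ k, (hr k + g k (vnext k)) - (1/(n:ℝ)) • ∑ j, g j vbarnext
      = (1/(n:ℝ)) • ∑ k, (g k (vnext k) - g k vbarnext) := by
    rw [husum', ← smul_sub, Finset.sum_sub_distrib]
  have hCbound : (n:ℝ)*‖(1/(n:ℝ)) • ∑ k, (hr k + g k (vnext k))
      - (1/(n:ℝ)) • ∑ j, g j vbarnext‖^2
      ≤ L^2*∑ i, ‖vnext i - vbarnext‖^2 := by
    have h := aux_meansq_le hn (fun k => g k (vnext k) - g k vbarnext) 0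
    simp only [sub_zero] at h
    rw [← hCeq] at h
    have h2 : ∑ k, ‖g k (vnext k) - g k vbarnext‖^2
        ≤ ∑ k, (L^2*‖vnext k - vbarnext‖^2) :=
      Finset.sum_le_sum (fun k _ => hsm2 k (vnext k) vbarnext)
    rw [← Finset.mul_sum] at h2
    linarith
  have hBbound : ∑ i, ‖g i vbarnext - g i (vnext i)‖^2
      ≤ L^2*∑ i, ‖vnext i - vbarnext‖^2 := by
    have h : ∀ i, ‖g i vbarnext - g i (vnext i)‖^2 ≤ L^2*‖vnext i - vbarnext‖^2 := by
      intro i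
      have h0 := hsm2 i vbarnext (vnext i)
      rw [norm_sub_rev vbarnext (vnext i)] at h0
      exact h0
    have h2 := Finset.sum_le_sum (fun i (_ : i ∈ Finset.univ) => h i)
    rw [← Finset.mul_sum] at h2
    exact h2
  have hK9 : ∑ i, ‖hnext i - ((1/(n:ℝ)) • ∑ j, g j vbarnext - g i vbarnext)‖^2
      ≤ 3*(ρ^2*∑ i, ‖(hr i + g i (vnext i)) - (1/(n:ℝ)) • ∑ k, (hr k + g k (vnext k))‖^2)
        + 6*(L^2*∑ i, ‖vnext i - vbarnext‖^2) := by
    have hper : ∀ i, ‖hnext i - ((1/(n:ℝ)) • ∑ j, g j vbarnext - g i vbarnext)‖^2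
        ≤ 3*(‖(∑ j, W i j • (hr j + g j (vnext j)))
              - (1/(n:ℝ)) • ∑ k, (hr k + g k (vnext k))‖^2
            + ‖g i vbarnext - g i (vnext i)‖^2
            + ‖(1/(n:ℝ)) • ∑ k, (hr k + g k (vnext k))
                - (1/(n:ℝ)) • ∑ j, g j vbarnext‖^2) := by
      intro i
      rw [show hnext i - ((1/(n:ℝ)) • ∑ j, g j vbarnext - g i vbarnext)
          = ((∑ j, W i j • (hr j + g j (vnext j)))
              - (1/(n:ℝ)) • ∑ k, (hr k + g k (vnext k)))
            + (g i vbarnext - g i (vnext i))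
            + ((1/(n:ℝ)) • ∑ k, (hr k + g k (vnext k))
                - (1/(n:ℝ)) • ∑ j, g j vbarnext) from by rw [hhnext i]; abel]
      exact aux_three_sq _ _ _
    have hs := Finset.sum_le_sum (fun i (_ : i ∈ Finset.univ) => hper i)
    have he : ∑ i, (3:ℝ)*(‖(∑ j, W i j • (hr j + g j (vnext j)))
              - (1/(n:ℝ)) • ∑ k, (hr k + g k (vnext k))‖^2
            + ‖g i vbarnext - g i (vnext i)‖^2
            + ‖(1/(n:ℝ)) • ∑ k, (hr k + g k (vnext k))
                - (1/(n:ℝ)) • ∑ j, g j vbarnext‖^2)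
        = 3*(∑ i, ‖(∑ j, W i j • (hr j + g j (vnext j)))
              - (1/(n:ℝ)) • ∑ k, (hr k + g k (vnext k))‖^2)
          + 3*(∑ i, ‖g i vbarnext - g i (vnext i)‖^2)
          + 3*((n:ℝ)*‖(1/(n:ℝ)) • ∑ k, (hr k + g k (vnext k))
                - (1/(n:ℝ)) • ∑ j, g j vbarnext‖^2) := by
      simp only [mul_add, Finset.sum_add_distrib, ← Finset.mul_sum, Finset.sum_const,
        Finset.card_univ, Fintype.card_fin, nsmul_eq_mul]
    rw [he] at hs
    linarith [hs, hAgap, hBbound, hCbound]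
  have hsimnext : ∑ j, ‖(((1/(n:ℝ)) • ∑ k, g k vbarnext) - g j vbarnext)
      - (((1/(n:ℝ)) • ∑ k, g k vbarr) - g j vbarr)‖^2
      ≤ (n:ℝ)*(δ^2*‖vbarnext - vbarr‖^2) := by
    have h := mul_le_mul_of_nonneg_left (hsim vbarnext vbarr) (le_of_lt hn0)
    rw [hncancel] at h
    exact h
  have hK10 : ∑ i, ‖(hr i + g i (vnext i)) - (1/(n:ℝ)) • ∑ k, (hr k + g k (vnext k))‖^2
      ≤ 3*(∑ i, ‖hr i - ((1/(n:ℝ)) • ∑ j, g j vbarr - g i vbarr)‖^2)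
        + 3*(L^2*∑ i, ‖vnext i - vbarnext‖^2)
        + 3*(δ^2*(∑ i, ‖vhalf i - vr i‖^2)) := by
    have hper : ∀ j, ‖(hr j + g j (vnext j)) - (1/(n:ℝ)) • ∑ k, (hr k + g k (vnext k))‖^2
        ≤ 3*(‖hr j - ((1/(n:ℝ)) • ∑ k, g k vbarr - g j vbarr)‖^2
            + ‖(g j (vnext j) - g j vbarnext)
                - (1/(n:ℝ)) • ∑ k, (g k (vnext k) - g k vbarnext)‖^2
            + ‖(((1/(n:ℝ)) • ∑ k, g k vbarnext) - g j vbarnext)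
                - (((1/(n:ℝ)) • ∑ k, g k vbarr) - g j vbarr)‖^2) := by
      intro j
      have hdec : (hr j + g j (vnext j)) - (1/(n:ℝ)) • ∑ k, (hr k + g k (vnext k))
          = (hr j - ((1/(n:ℝ)) • ∑ k, g k vbarr - g j vbarr))
            + ((g j (vnext j) - g j vbarnext)
                - (1/(n:ℝ)) • ∑ k, (g k (vnext k) - g k vbarnext))
            + (-((((1/(n:ℝ)) • ∑ k, g k vbarnext) - g j vbarnext)
                - (((1/(n:ℝ)) • ∑ k, g k vbarr) - g j vbarr))) := by
        rw [husum', Finset.sum_sub_distrib, smul_sub]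
        abel
      rw [hdec]
      have h3 := aux_three_sq (hr j - ((1/(n:ℝ)) • ∑ k, g k vbarr - g j vbarr))
        ((g j (vnext j) - g j vbarnext)
            - (1/(n:ℝ)) • ∑ k, (g k (vnext k) - g k vbarnext))
        (-((((1/(n:ℝ)) • ∑ k, g k vbarnext) - g j vbarnext)
            - (((1/(n:ℝ)) • ∑ k, g k vbarr) - g j vbarr)))
      rw [norm_neg] at h3
      exact h3
    have hs := Finset.sum_le_sum (fun j (_ : j ∈ Finset.univ) => hper j)
    have he : ∑ j, (3:ℝ)*(‖hr j - ((1/(n:ℝ)) • ∑ k, g k vbarr - g j vbarr)‖^2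
            + ‖(g j (vnext j) - g j vbarnext)
                - (1/(n:ℝ)) • ∑ k, (g k (vnext k) - g k vbarnext)‖^2
            + ‖(((1/(n:ℝ)) • ∑ k, g k vbarnext) - g j vbarnext)
                - (((1/(n:ℝ)) • ∑ k, g k vbarr) - g j vbarr)‖^2)
        = 3*(∑ j, ‖hr j - ((1/(n:ℝ)) • ∑ k, g k vbarr - g j vbarr)‖^2)
          + 3*(∑ j, ‖(g j (vnext j) - g j vbarnext)
                - (1/(n:ℝ)) • ∑ k, (g k (vnext k) - g k vbarnext)‖^2)
          + 3*(∑ j, ‖(((1/(n:ℝ)) • ∑ k, g k vbarnext) - g j vbarnext)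
                - (((1/(n:ℝ)) • ∑ k, g k vbarr) - g j vbarr)‖^2) := by
      simp only [mul_add, Finset.sum_add_distrib, ← Finset.mul_sum]
    rw [he] at hs
    have hc : ∑ j, ‖(g j (vnext j) - g j vbarnext)
        - (1/(n:ℝ)) • ∑ k, (g k (vnext k) - g k vbarnext)‖^2
        ≤ L^2*∑ i, ‖vnext i - vbarnext‖^2 := by
      have h1 := aux_var_le hn (fun k => g k (vnext k) - g k vbarnext) 0
      simp only [sub_zero] at h1
      have h2 : ∑ k, ‖g k (vnext k) - g k vbarnext‖^2
          ≤ ∑ k, (L^2*‖vnext k - vbarnext‖^2) :=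
        Finset.sum_le_sum (fun k _ => hsm2 k (vnext k) vbarnext)
      rw [← Finset.mul_sum] at h2
      linarith
    have hd2 : ∑ j, ‖(((1/(n:ℝ)) • ∑ k, g k vbarnext) - g j vbarnext)
        - (((1/(n:ℝ)) • ∑ k, g k vbarr) - g j vbarr)‖^2
        ≤ δ^2*(∑ i, ‖vhalf i - vr i‖^2) := by
      have h1 := mul_le_mul_of_nonneg_left hK7 (sq_nonneg δ)
      linarith [hsimnext, h1]
    linarith [hs, hc, hd2]
    -- scalar endgame
  have hδne : δ ≠ 0 := ne_of_gt hδ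
  rw [hfbar, hfbar, hErrnext, hErrr, hXinext, hXir]
  set S := ∑ i, ‖vr i - xnext i‖^2 with hSdef
  set Vr := ∑ i, ‖vr i - xstar‖^2 with hVrdef
  set Fb := ∑ i, f i xbarnext with hFbdef
  set Fs := ∑ i, f i xstar with hFsdef
  set Fx := ∑ i, f i (xnext i) with hFxdef
  set Hx := ∑ i, ⟪hr i, xnext i⟫ with hHxdef
  set SVn := ∑ i, ‖vnext i - xstar‖^2 with hSVndef
  set NEr := ∑ i, ‖hr i - ((1/(n:ℝ)) • ∑ j, g j vbarr - g i vbarr)‖^2 with hNErdef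
  set NEn := ∑ i, ‖hnext i - ((1/(n:ℝ)) • ∑ j, g j vbarnext - g i vbarnext)‖^2 with hNEndef
  set NXr := ∑ i, ‖vr i - vbarr‖^2 with hNXrdef
  set NXn := ∑ i, ‖vnext i - vbarnext‖^2 with hNXndef
  set T := ∑ i, ‖vhalf i - vbarnext‖^2 with hTdef
  set R := ∑ i, ‖vhalf i - vr i‖^2 with hRdef
  set Usum := ∑ i, ‖(hr i + g i (vnext i)) - (1/(n:ℝ)) • ∑ k, (hr k + g k (vnext k))‖^2
    with hUdef
  set Hsum := ∑ i, ‖xstar - vhalf i‖^2 with hHsumdef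
  set Psum := ∑ i, ‖g i (xnext i) + hr i + (20 * δ) • (xnext i - vr i)‖^2 with hPsumdef
  set NErX := ∑ i, ‖hr i - ((1/(n:ℝ)) • ∑ j, g j xbarnext - g i xbarnext)‖^2 with hNErXdef
  set BX := ∑ i, ‖xnext i - xbarnext‖^2 with hBXdef
  set nb := (n:ℝ)*‖vbarnext - xstar‖^2 with hnbdef
  have hS0 : (0:ℝ) ≤ S := by rw [hSdef]; positivity
  have hT0 : (0:ℝ) ≤ T := by rw [hTdef]; positivity
  have hNEr0 : (0:ℝ) ≤ NEr := by rw [hNErdef]; positivity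
  have hK3' : 4*δ*Fb ≤ 4*δ*(Fx + Hx) + NErX + 4*δ^2*BX := by
    have h := mul_le_mul_of_nonneg_left hB1 (by positivity : (0:ℝ) ≤ 4*δ)
    linarith only [hB2, h]
  have hE2 : 4*δ*(μ+20*δ)*Fb + 2*δ*(μ+20*δ)^2*(T + nb) + 26*(μ+20*δ)*δ^2*S
      ≤ 4*δ*(μ+20*δ)*Fs + 40*(μ+20*δ)*δ^2*Vr + 2*(μ+20*δ)*NEr
        + 8*(μ+20*δ)*δ^2*NXr := by
    have h1 := mul_le_mul_of_nonneg_left hK3' (le_of_lt hMpos)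
    have h2 := mul_le_mul_of_nonneg_left hK1 (by positivity : (0:ℝ) ≤ 2*δ)
    have h3 := mul_le_mul_of_nonneg_left hK4 (le_of_lt hMpos)
    have h4 := mul_le_mul_of_nonneg_left hK5 (by positivity : (0:ℝ) ≤ 4*δ^2*(μ+20*δ))
    have h7 := mul_le_mul_of_nonneg_left hsub' (by positivity : (0:ℝ) ≤ 2*δ)
    have h5 : (0:ℝ) ≤ μ*(δ^2*S) := mul_nonneg hμ (mul_nonneg (sq_nonneg δ) hS0)
    have h6 : 2*δ*((μ+20*δ)^2*Hsum) = 2*δ*((μ+20*δ)^2*(T + nb)) := by rw [G3]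
    linarith only [h1, h2, h3, h4, h5, h6, h7]
  have hNEnfull : NEn ≤ 9*ρ^2*NEr + (9*ρ^2*L^2 + 6*L^2)*NXn + (99/5)*ρ^2*δ^2*S := by
    have h1 := mul_le_mul_of_nonneg_left hK10 (by positivity : (0:ℝ) ≤ 3*ρ^2)
    have h2 := mul_le_mul_of_nonneg_left hK11 (by positivity : (0:ℝ) ≤ 9*ρ^2*δ^2)
    linarith only [hK9, h1, h2]
  have hstar2 : 12*δ^2*(μ+20*δ)^2*NXn + (μ+20*δ)^2*NEn
      ≤ 10*δ^2*(μ+20*δ)^2*T + 130*δ^3*(μ+20*δ)*S + 10*δ*(μ+20*δ)*NEr := by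
    have hNEnM := mul_le_mul_of_nonneg_left hNEnfull (sq_nonneg (μ+20*δ))
    have c1 : (0:ℝ) ≤ 9*(μ+20*δ)*NEr := mul_nonneg (by positivity) hNEr0
    have hm1 := mul_le_mul_of_nonneg_left hMρ c1
    have c2 : (0:ℝ) ≤ δ*(μ+20*δ)*NEr := mul_nonneg (by positivity) hNEr0
    have hcoefpos : (0:ℝ) ≤ (9*ρ^2*L^2 + 6*L^2 + 12*δ^2)*(μ+20*δ)^2 := by positivity
    have hg1 := mul_le_mul_of_nonneg_left G1 hcoefpos
    have hcoef : 9*ρ^2*L^2*ρ^2 + 6*L^2*ρ^2 + 12*δ^2*ρ^2 ≤ 10*δ^2 := by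
      nlinarith only [hρL2, hρ125, mul_le_mul hρ125 hρL2 (by positivity) (by norm_num),
        mul_le_mul_of_nonneg_left hρ125 (by positivity : (0:ℝ) ≤ 12*δ^2), sq_nonneg δ]
    have hMT : (0:ℝ) ≤ (μ+20*δ)^2*T := mul_nonneg (sq_nonneg _) hT0
    have hg1T := mul_le_mul_of_nonneg_right hcoef hMT
    have c3 : (0:ℝ) ≤ (99/5)*δ^2*(μ+20*δ)*S :=
      mul_nonneg (by positivity) hS0
    have hm3 := mul_le_mul_of_nonneg_left hMρ c3
    have c4 : (0:ℝ) ≤ δ^3*(μ+20*δ)*S := mul_nonneg (by positivity) hS0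
    linarith only [hNEnM, hm1, hg1, hg1T, hm3, c2, c4]
  have hSL : Fb + (1 + μ/(20*δ))*(10*δ*SVn + (1/δ)*NEn + 2*δ*NXn)
      ≤ Fs + 10*δ*Vr + (1/δ)*NEr + 2*δ*NXr := by
    refine le_of_mul_le_mul_left ?_ (show (0:ℝ) < 20*δ^2 by positivity)
    have heqL : 20*δ^2*(Fb + (1 + μ/(20*δ))*(10*δ*SVn + (1/δ)*NEn + 2*δ*NXn))
        = 20*δ^2*Fb + (μ+20*δ)*(10*δ^2*SVn + NEn + 2*δ^2*NXn) := by
      field_simp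
      ring
    have heqR : 20*δ^2*(Fs + 10*δ*Vr + (1/δ)*NEr + 2*δ*NXr)
        = 20*δ^2*Fs + 200*δ^3*Vr + 20*δ*NEr + 40*δ^3*NXr := by
      field_simp
      ring
    rw [heqL, heqR]
    refine le_of_mul_le_mul_left ?_ hMpos
    have hE25 := mul_le_mul_of_nonneg_left hE2 (by positivity : (0:ℝ) ≤ 5*δ)
    have hG2m : 10*δ^2*(μ+20*δ)^2*SVn = 10*δ^2*(μ+20*δ)^2*(NXn + nb) := by rw [G2]
    linarith only [hE25, hstar2, hG2m]
  have hmul := mul_le_mul_of_nonneg_left hSL (by positivity : (0:ℝ) ≤ 1/(n:ℝ))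
  refine le_trans (le_of_eq ?_) (le_trans hmul (le_of_eq ?_))
  · ring
  · ring
end

section
/- (Lower bounds on the accelerated coefficients A_r.) Consider the sequences A_r, B_r, a_r defined by the accelerated recursion with parameters λ > 0 and μ ≥ 0. If μ ≤ 4λ, then A_r ≥ r²/(4λ) for all r ≥ 0; moreover, if additionally μ > 0, then for all r ≥ 0, A_r ≥ (1/(4μ))·[(1 + √(μ/(4λ)))^r − (1 − √(μ/(4λ)))^r]² ≥ r²/(4λ). If μ > 4λ, then for all r ≥ 1, A_r ≥ (1/(4λ))·(1 + √(μ/(4λ)))^{2(r−1)}. -/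
/-!
Write `a = A (r + 1) - A r`. The defining equation says `√λ · a = √A (r + 1) · √(1 + μ A r)`, and
`a = (√A (r + 1) - √A r)(√A (r + 1) + √A r) ≤ 2 √A (r + 1) (√A (r + 1) - √A r)`, hence
`√(1 + μ A r) ≤ 2 √λ (√A (r + 1) - √A r)`. So `√A r` grows by at least `1 / (2√λ)` per step, and
also by the factor `1 + q` with `q = √(μ / (4λ))`; with `A 1 = 1 / λ` this gives the quadratic and
the geometric bounds. For the sharper bound put `b r = √(1 + μ A r)` and `c r = √(μ A r)`: the same
identity gives `c (r + 1)² - c r² = 2 q c (r + 1) b r`, whence `c (r + 1) ≥ c r + q b r` and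
`b (r + 1) ≥ b r + q c r`, and comparison with the linear recursion solved by
`((1 + q)^r ± (1 - q)^r) / 2` bounds `c r` from below.
-/

lemma pos_and_quadratic_of_eq_root {lam B C x : ℝ} (hlam : 0 < lam) (hC : 0 ≤ C) (hB : 0 < B)
    (hx : x = (B + √(B ^ 2 + 4 * lam * C * B)) / (2 * lam)) :
    0 < x ∧ lam * x ^ 2 = (C + x) * B := by
  have hD : √(B ^ 2 + 4 * lam * C * B) ^ 2 = B ^ 2 + 4 * lam * C * B :=
    Real.sq_sqrt (by positivity)
  subst hx
  refine ⟨by positivity, ?_⟩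
  generalize √(B ^ 2 + 4 * lam * C * B) = s at hD ⊢
  field_simp
  linear_combination hD

lemma two_mul_sqrt_mul_sqrt_div {lam : ℝ} (hlam : 0 < lam) (μ : ℝ) :
    2 * √lam * √(μ / (4 * lam)) = √μ := by
  rw [Real.sqrt_div' μ (by positivity), Real.sqrt_mul' 4 hlam.le,
    show (4 : ℝ) = 2 ^ 2 by norm_num, Real.sqrt_sq zero_le_two]
  field_simp

lemma coupled_step {q b c α β : ℝ} (hq : 0 ≤ q) (hb : 0 ≤ b) (hc : 0 ≤ c) (hα : 0 < α)
    (hβ : 0 ≤ β) (hbc : b ^ 2 = 1 + c ^ 2) (hβα : β ^ 2 = 1 + α ^ 2)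
    (h : α ^ 2 - c ^ 2 = 2 * q * α * b) :
    c + q * b ≤ α ∧ b + q * c ≤ β := by
  have hqb : q * b ≤ α := by
    have : α * (2 * (q * b)) ≤ α * α := by nlinarith [sq_nonneg c]
    linarith [le_of_mul_le_mul_left this hα, mul_nonneg hq hb]
  have hcα : c + q * b ≤ α := by
    have hsq : (α - q * b) ^ 2 = c ^ 2 + (q * b) ^ 2 := by linear_combination h
    have : c ^ 2 ≤ (α - q * b) ^ 2 := by rw [hsq]; exact le_add_of_nonneg_right (sq_nonneg _)
    linarith [(sq_le_sq₀ hc (sub_nonneg.2 hqb)).1 this]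
  refine ⟨hcα, (sq_le_sq₀ (by positivity) hβ).1 ?_⟩
  have : 2 * q * b * (c + q * b) ≤ 2 * q * b * α := by gcongr
  nlinarith [mul_nonneg hq hq]

lemma coupled_growth_lower_bound {q : ℝ} (hq : 0 ≤ q) {b c : ℕ → ℝ} (hb0 : 1 ≤ b 0)
    (hc0 : 0 ≤ c 0) (hb : ∀ r, b r + q * c r ≤ b (r + 1)) (hc : ∀ r, c r + q * b r ≤ c (r + 1))
    (r : ℕ) : ((1 + q) ^ r + (1 - q) ^ r) / 2 ≤ b r ∧ ((1 + q) ^ r - (1 - q) ^ r) / 2 ≤ c r := by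
  induction r with
  | zero => simpa using ⟨hb0, hc0⟩
  | succ r ih =>
    obtain ⟨ihb, ihc⟩ := ih
    have hqb := mul_le_mul_of_nonneg_left ihb hq
    have hqc := mul_le_mul_of_nonneg_left ihc hq
    rw [pow_succ, pow_succ]
    constructor
    · linarith [hb r]
    · linarith [hc r]

lemma two_mul_nat_mul_le_pow_sub_pow {q : ℝ} (hq : 0 ≤ q) (r : ℕ) :
    2 * r * q ≤ (1 + q) ^ r - (1 - q) ^ r := by
  suffices 2 * r * q ≤ (1 + q) ^ r - (1 - q) ^ r ∧ 2 ≤ (1 + q) ^ r + (1 - q) ^ r from this.1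
  induction r with
  | zero => norm_num
  | succ r ih =>
    obtain ⟨ihsub, ihadd⟩ := ih
    have hsub : 0 ≤ (1 + q) ^ r - (1 - q) ^ r := le_trans (by positivity) ihsub
    rw [pow_succ, pow_succ]
    push_cast
    constructor
    · linarith [mul_le_mul_of_nonneg_left ihadd hq]
    · linarith [mul_nonneg hq hsub]

lemma sq_div_le_pow_sub_pow_sq {lam μ : ℝ} (hlam : 0 < lam) (hμ : 0 < μ) (r : ℕ) :
    (r : ℝ) ^ 2 / (4 * lam) ≤ 1 / (4 * μ) * ((1 + √(μ / (4 * lam))) ^ r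
      - (1 - √(μ / (4 * lam))) ^ r) ^ 2 := by
  set q := √(μ / (4 * lam))
  have hq2 : q ^ 2 = μ / (4 * lam) := Real.sq_sqrt (by positivity)
  have hrq := two_mul_nat_mul_le_pow_sub_pow (Real.sqrt_nonneg (μ / (4 * lam))) r
  calc (r : ℝ) ^ 2 / (4 * lam) = 1 / (4 * μ) * (2 * r * q) ^ 2 := by
        rw [mul_pow, hq2]; field_simp; norm_num
    _ ≤ _ := by gcongr

structure IsAcceleratedSeq (lam μ : ℝ) (A : ℕ → ℝ) : Prop where
  zero : A 0 = 0
  lt_succ : ∀ r, A r < A (r + 1)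
  sq_increment : ∀ r, lam * (A (r + 1) - A r) ^ 2 = A (r + 1) * (1 + μ * A r)

lemma IsAcceleratedSeq.of_root {lam μ : ℝ} (hlam : 0 < lam) (hμ : 0 ≤ μ) {A a : ℕ → ℝ}
    (hA0 : A 0 = 0)
    (harec : ∀ r, a (r + 1)
      = ((1 + μ * A r) + √((1 + μ * A r) ^ 2 + 4 * lam * A r * (1 + μ * A r))) / (2 * lam))
    (hArec : ∀ r, A (r + 1) = A r + a (r + 1)) :
    IsAcceleratedSeq lam μ A := by
  have hstep : ∀ r, 0 ≤ A r → 0 < a (r + 1) ∧ lam * a (r + 1) ^ 2 = A (r + 1) * (1 + μ * A r) :=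
    fun r hA => hArec r ▸ pos_and_quadratic_of_eq_root hlam hA (by positivity) (harec r)
  have hnonneg : ∀ r, 0 ≤ A r := by
    intro r
    induction r with
    | zero => exact hA0.ge
    | succ r ih => rw [hArec r]; linarith [(hstep r ih).1]
  refine ⟨hA0, fun r => ?_, fun r => ?_⟩
  · rw [hArec r]; linarith [(hstep r (hnonneg r)).1]
  · rw [← (hstep r (hnonneg r)).2, hArec r, add_sub_cancel_left]

namespace IsAcceleratedSeq

variable {lam μ : ℝ} {A : ℕ → ℝ} (h : IsAcceleratedSeq lam μ A)
include h

lemma nonneg (r : ℕ) : 0 ≤ A r :=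
  h.zero ▸ (strictMono_nat_of_lt_succ h.lt_succ).monotone (Nat.zero_le r)

lemma pos_succ (r : ℕ) : 0 < A (r + 1) :=
  (h.nonneg r).trans_lt (h.lt_succ r)

lemma one_eq_inv : A 1 = lam⁻¹ := by
  have h1 : lam * A 1 * A 1 = 1 * A 1 := by
    simpa [h.zero, sq, mul_assoc] using h.sq_increment 0
  exact eq_inv_of_mul_eq_one_right (mul_right_cancel₀ (h.pos_succ 0).ne' h1)

lemma sqrt_mul_sub (hlam : 0 ≤ lam) (r : ℕ) :
    √lam * (A (r + 1) - A r) = √(A (r + 1)) * √(1 + μ * A r) := by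
  calc √lam * (A (r + 1) - A r) = √(lam * (A (r + 1) - A r) ^ 2) := by
        rw [Real.sqrt_mul hlam, Real.sqrt_sq (sub_nonneg.2 (h.lt_succ r).le)]
    _ = √(A (r + 1)) * √(1 + μ * A r) := by
        rw [h.sq_increment, Real.sqrt_mul (h.nonneg _)]

lemma sqrt_one_add_le (hlam : 0 < lam) (r : ℕ) :
    √(1 + μ * A r) ≤ 2 * √lam * (√(A (r + 1)) - √(A r)) := by
  set s := √(A r)
  set x := √(A (r + 1))
  have hx : 0 < x := Real.sqrt_pos.2 (h.pos_succ r)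
  have hsx : s ≤ x := Real.sqrt_le_sqrt (h.lt_succ r).le
  have hdiff : A (r + 1) - A r = (x - s) * (x + s) := by
    rw [← Real.sq_sqrt (h.nonneg r), ← Real.sq_sqrt (h.nonneg (r + 1))]
    ring
  have key : x * √(1 + μ * A r) ≤ x * (2 * √lam * (x - s)) := by
    rw [← h.sqrt_mul_sub hlam.le, hdiff]
    have : 0 ≤ √lam * (x - s) := mul_nonneg (Real.sqrt_nonneg _) (sub_nonneg.2 hsx)
    linarith [mul_le_mul_of_nonneg_left (by linarith : x + s ≤ 2 * x) this]
  exact le_of_mul_le_mul_left key hx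

lemma nat_div_le_sqrt (hlam : 0 < lam) (hμ : 0 ≤ μ) (r : ℕ) : r / (2 * √lam) ≤ √(A r) := by
  have hL : 0 < 2 * √lam := by positivity
  induction r with
  | zero => simp [h.zero]
  | succ r ih =>
    have hstep : 1 ≤ 2 * √lam * (√(A (r + 1)) - √(A r)) :=
      (Real.one_le_sqrt.2 (by nlinarith [h.nonneg r])).trans (h.sqrt_one_add_le hlam r)
    rw [div_le_iff₀ hL] at ih ⊢
    push_cast
    linarith

lemma sq_div_le (hlam : 0 < lam) (hμ : 0 ≤ μ) (r : ℕ) : (r : ℝ) ^ 2 / (4 * lam) ≤ A r := by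
  have h2 := pow_le_pow_left₀ (by positivity) (h.nat_div_le_sqrt hlam hμ r) 2
  rwa [Real.sq_sqrt (h.nonneg r), div_pow, mul_pow, Real.sq_sqrt hlam.le,
    show (2 : ℝ) ^ 2 = 4 by norm_num] at h2

lemma one_add_sqrt_mul_le (hlam : 0 < lam) (hμ : 0 ≤ μ) (r : ℕ) :
    (1 + √(μ / (4 * lam))) * √(A r) ≤ √(A (r + 1)) := by
  have hμA : √μ * √(A r) ≤ √(1 + μ * A r) := by
    rw [← Real.sqrt_mul hμ]
    exact Real.sqrt_le_sqrt (by linarith)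
  rw [← two_mul_sqrt_mul_sqrt_div hlam, mul_assoc] at hμA
  have hq := le_of_mul_le_mul_left (hμA.trans (h.sqrt_one_add_le hlam r)) (by positivity)
  linarith

lemma pow_div_le (hlam : 0 < lam) (hμ : 0 ≤ μ) (r : ℕ) :
    (1 + √(μ / (4 * lam))) ^ (2 * r) / lam ≤ A (r + 1) := by
  have hsqrt : (1 + √(μ / (4 * lam))) ^ r / √lam ≤ √(A (r + 1)) := by
    induction r with
    | zero => rw [pow_zero, h.one_eq_inv, Real.sqrt_inv, one_div]
    | succ r ih =>
      calc (1 + √(μ / (4 * lam))) ^ (r + 1) / √lam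
          = (1 + √(μ / (4 * lam))) * ((1 + √(μ / (4 * lam))) ^ r / √lam) := by ring
        _ ≤ (1 + √(μ / (4 * lam))) * √(A (r + 1)) := by gcongr
        _ ≤ √(A (r + 1 + 1)) := h.one_add_sqrt_mul_le hlam hμ (r + 1)
  have h2 := pow_le_pow_left₀ (by positivity) hsqrt 2
  rwa [Real.sq_sqrt (h.nonneg _), div_pow, ← pow_mul, Real.sq_sqrt hlam.le, mul_comm r] at h2

lemma sqrt_coupled_step (hlam : 0 < lam) (hμ : 0 < μ) (r : ℕ) :
    √(μ * A r) + √(μ / (4 * lam)) * √(1 + μ * A r) ≤ √(μ * A (r + 1)) ∧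
      √(1 + μ * A r) + √(μ / (4 * lam)) * √(μ * A r) ≤ √(1 + μ * A (r + 1)) := by
  have hnn := h.nonneg r
  have hnn' := h.nonneg (r + 1)
  refine coupled_step (Real.sqrt_nonneg _) (Real.sqrt_nonneg _) (Real.sqrt_nonneg _)
    (Real.sqrt_pos.2 (mul_pos hμ (h.pos_succ r))) (Real.sqrt_nonneg _) ?_ ?_ ?_
  · rw [Real.sq_sqrt (by positivity), Real.sq_sqrt (by positivity)]
  · rw [Real.sq_sqrt (by positivity), Real.sq_sqrt (by positivity)]
  · have hsub := h.sqrt_mul_sub hlam.le r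
    have hq := two_mul_sqrt_mul_sqrt_div hlam μ
    have hμμ := Real.mul_self_sqrt hμ.le
    rw [Real.sq_sqrt (by positivity), Real.sq_sqrt (by positivity), Real.sqrt_mul hμ.le]
    linear_combination (2 * √(μ / (4 * lam)) * √μ) * hsub - (√μ * (A (r + 1) - A r)) * hq
      - (A (r + 1) - A r) * hμμ

lemma pow_sub_pow_sq_le (hlam : 0 < lam) (hμ : 0 < μ) (r : ℕ) :
    1 / (4 * μ) * ((1 + √(μ / (4 * lam))) ^ r - (1 - √(μ / (4 * lam))) ^ r) ^ 2 ≤ A r := by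
  set q := √(μ / (4 * lam))
  have hq : 0 ≤ q := Real.sqrt_nonneg _
  have hc := (coupled_growth_lower_bound hq (by simp [h.zero]) (by positivity)
    (fun r => (h.sqrt_coupled_step hlam hμ r).2) (fun r => (h.sqrt_coupled_step hlam hμ r).1) r).2
  have hd : 0 ≤ ((1 + q) ^ r - (1 - q) ^ r) / 2 :=
    div_nonneg (le_trans (by positivity) (two_mul_nat_mul_le_pow_sub_pow hq r)) zero_le_two
  have h2 := pow_le_pow_left₀ hd hc 2
  rw [Real.sq_sqrt (mul_nonneg hμ.le (h.nonneg r))] at h2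
  calc 1 / (4 * μ) * ((1 + q) ^ r - (1 - q) ^ r) ^ 2
      = (((1 + q) ^ r - (1 - q) ^ r) / 2) ^ 2 / μ := by field_simp; ring
    _ ≤ μ * A r / μ := by gcongr
    _ = A r := by field_simp

end IsAcceleratedSeq

/-- Lower bounds on the accelerated coefficients `A_r`. -/
theorem stmt_13 (lam μ : ℝ) (hlam : 0 < lam) (hμ : 0 ≤ μ)
    (A a : ℕ → ℝ) (hA0 : A 0 = 0)
    (harec : ∀ r, a (r + 1)
      = ((1 + μ * A r)
          + Real.sqrt ((1 + μ * A r) ^ 2 + 4 * lam * A r * (1 + μ * A r)))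
        / (2 * lam))
    (hArec : ∀ r, A (r + 1) = A r + a (r + 1)) :
    (μ ≤ 4 * lam →
      (∀ r : ℕ, (r : ℝ) ^ 2 / (4 * lam) ≤ A r) ∧
      (0 < μ → ∀ r : ℕ,
        (1 / (4 * μ)) * ((1 + Real.sqrt (μ / (4 * lam))) ^ r
            - (1 - Real.sqrt (μ / (4 * lam))) ^ r) ^ 2 ≤ A r ∧
        (r : ℝ) ^ 2 / (4 * lam)
          ≤ (1 / (4 * μ)) * ((1 + Real.sqrt (μ / (4 * lam))) ^ r
              - (1 - Real.sqrt (μ / (4 * lam))) ^ r) ^ 2)) ∧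
    (4 * lam < μ → ∀ r : ℕ, 1 ≤ r →
      (1 / (4 * lam)) * (1 + Real.sqrt (μ / (4 * lam))) ^ (2 * (r - 1)) ≤ A r) := by
  have h := IsAcceleratedSeq.of_root hlam hμ hA0 harec hArec
  refine ⟨fun _ => ⟨h.sq_div_le hlam hμ, fun hμ₀ r =>
    ⟨h.pow_sub_pow_sq_le hlam hμ₀ r, sq_div_le_pow_sub_pow_sq hlam hμ₀ r⟩⟩, fun _ r hr => ?_⟩
  obtain ⟨k, rfl⟩ := Nat.exists_eq_add_of_le' hr
  calc 1 / (4 * lam) * (1 + √(μ / (4 * lam))) ^ (2 * (k + 1 - 1))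
      ≤ (1 + √(μ / (4 * lam))) ^ (2 * k) / lam := by
        rw [Nat.add_sub_cancel, one_div_mul_eq_div]
        gcongr
        linarith
    _ ≤ A (k + 1) := h.pow_div_le hlam hμ k
end

section
/- (Upper bound on A_r when μ = 0.) Consider the sequences A_r, a_r defined by the accelerated recursion with parameters λ > 0 and μ = 0, so that B_r = 1 and a_{r+1} = (1 + √(1 + 4λA_r))/(2λ). Then A_r ≤ r²/λ for all r ≥ 0. -/
/-- Upper bound on `A_r` when `μ = 0`. -/
theorem stmt_14 (lam μ : ℝ) (hlam : 0 < lam) (hμ : μ = 0)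
    (A a : ℕ → ℝ) (hA0 : A 0 = 0)
    (harec : ∀ r, a (r + 1)
      = ((1 + μ * A r)
          + Real.sqrt ((1 + μ * A r) ^ 2 + 4 * lam * A r * (1 + μ * A r)))
        / (2 * lam))
    (hArec : ∀ r, A (r + 1) = A r + a (r + 1)) :
    ∀ r : ℕ, A r ≤ (r : ℝ) ^ 2 / lam := by
  intro r
  induction r with
  | zero => simp [hA0]
  | succ n ih =>
    have ih' : lam * A n ≤ (n : ℝ) ^ 2 := by
      have := mul_le_mul_of_nonneg_left ih (le_of_lt hlam)
      rwa [mul_div_cancel₀ _ (ne_of_gt hlam)] at this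
    have hs : Real.sqrt (1 + 4 * lam * A n) ≤ 2 * (n : ℝ) + 1 := by
      calc Real.sqrt (1 + 4 * lam * A n) ≤ Real.sqrt ((2 * (n : ℝ) + 1) ^ 2) :=
            Real.sqrt_le_sqrt (by nlinarith [Nat.cast_nonneg (α := ℝ) n])
        _ = 2 * (n : ℝ) + 1 := Real.sqrt_sq (by positivity)
    have hA : A (n + 1) = A n + (1 + Real.sqrt (1 + 4 * lam * A n)) / (2 * lam) := by
      rw [hArec, harec, hμ]
      ring_nf
    rw [hA, le_div_iff₀ hlam]
    have h2 : (1 + Real.sqrt (1 + 4 * lam * A n)) / (2 * lam) * lam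
        = (1 + Real.sqrt (1 + 4 * lam * A n)) / 2 := by
      field_simp
    push_cast
    nlinarith [Real.sqrt_nonneg (1 + 4 * lam * A n), Nat.cast_nonneg (α := ℝ) n]
end

section
/- (Bounds on A_r/a_{r+1}.) Consider the sequences A_r, B_r, a_r defined by the accelerated recursion with parameters λ > 0 and μ ≥ 0. For every r ≥ 1: if μ > 0, then 2·(1 + μ/λ)^{−1}·(1 + √(1 + 4λ/μ))^{−1} ≤ A_r/a_{r+1} ≤ 2λ/μ; if μ = 0, then r/5 ≤ A_r/a_{r+1} ≤ r. -/
/-!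
Everything follows from the quadratic identity `λ a_{r+1}² = (A_r + a_{r+1}) B_r` that defines
`a_{r+1}`. For `μ > 0` it gives `λ a_{r+1} > μ A_r` at once; and since `λ A_r ≥ 1` makes
`B_r ≤ (λ + μ) A_r`, the ratio `t = a_{r+1} / A_r` satisfies `t² ≤ c (t + 1)` with `c = 1 + μ/λ`,
so `t` is at most the positive root `(c + √(c² + 4c)) / 2 ≤ c (1 + √(1 + 4λ/μ)) / 2`.
For `μ = 0` the ratio `q_r = A_r / a_{r+1} = λ a_{r+1} - 1` satisfies `q_r (q_r + 1) = λ A_r` and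
`λ A_{r+1} = λ A_r + q_r + 1`; an induction traps `λ A_r` between `(r/5)(r/5 + 1)` and `r (r + 1)`,
and hence `q_r` between `r/5` and `r`.
-/

open Real

structure IsAcceleratedSeq_s15 (lam μ : ℝ) (A a : ℕ → ℝ) : Prop where
  lam_pos : 0 < lam
  mu_nonneg : 0 ≤ μ
  A_zero : A 0 = 0
  a_succ : ∀ r, a (r + 1) =
    ((1 + μ * A r) + √((1 + μ * A r) ^ 2 + 4 * lam * A r * (1 + μ * A r))) / (2 * lam)
  A_succ : ∀ r, A (r + 1) = A r + a (r + 1)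

theorem lam_mul_sq_eq_of_eq_root {lam A B a : ℝ} (hlam : lam ≠ 0)
    (hd : 0 ≤ B ^ 2 + 4 * lam * A * B)
    (ha : a = (B + √(B ^ 2 + 4 * lam * A * B)) / (2 * lam)) :
    lam * a ^ 2 = (A + a) * B := by
  have hdisc : discrim lam (-B) (-(A * B))
      = √(B ^ 2 + 4 * lam * A * B) * √(B ^ 2 + 4 * lam * A * B) := by
    rw [mul_self_sqrt hd, discrim]; ring
  have hroot := (quadratic_eq_zero_iff hlam hdisc a).2 (Or.inl (by rw [ha, neg_neg]))
  linear_combination hroot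

theorem two_mul_le_add_sqrt_of_sq_le {x b c : ℝ} (h : x ^ 2 ≤ b * x + c) :
    2 * x ≤ b + √(b ^ 2 + 4 * c) := by
  have : |2 * x - b| ≤ √(b ^ 2 + 4 * c) := abs_le_sqrt (by nlinarith)
  linarith [le_abs_self (2 * x - b)]

theorem sqrt_sq_add_four_mul_le {lam μ : ℝ} (hlam : 0 < lam) (hμ : 0 < μ) :
    √((1 + μ / lam) ^ 2 + 4 * (1 + μ / lam)) ≤ (1 + μ / lam) * √(1 + 4 * lam / μ) := by
  have hc : 0 < 1 + μ / lam := by positivity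
  rw [← sqrt_sq hc.le, ← sqrt_mul (sq_nonneg _), sqrt_sq hc.le]
  apply sqrt_le_sqrt
  have : (1 + μ / lam) ^ 2 * (1 + 4 * lam / μ) - ((1 + μ / lam) ^ 2 + 4 * (1 + μ / lam))
      = 4 * (1 + μ / lam) * lam / μ := by
    field_simp; ring
  have : 0 < 4 * (1 + μ / lam) * lam / μ := by positivity
  linarith

theorem le_of_mul_add_one_le_mul_add_one {s m : ℝ} (hm : 0 ≤ m) (h : s * (s + 1) ≤ m * (m + 1)) :
    s ≤ m := by
  nlinarith

section Ratio

variable {lam μ A a : ℝ}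

theorem div_le_of_lam_mul_sq_eq (hlam : 0 < lam) (hμ : 0 < μ) (hA : 0 ≤ A) (ha : 0 < a)
    (hq : lam * a ^ 2 = (A + a) * (1 + μ * A)) : A / a ≤ 2 * lam / μ := by
  rw [div_le_div_iff₀ ha hμ]
  nlinarith [mul_pos hlam ha]

theorem inv_mul_inv_le_div_of_lam_mul_sq_eq (hlam : 0 < lam) (hμ : 0 < μ) (hA : 1 ≤ lam * A)
    (ha : 0 < a) (hq : lam * a ^ 2 = (A + a) * (1 + μ * A)) :
    2 * (1 + μ / lam)⁻¹ * (1 + √(1 + 4 * lam / μ))⁻¹ ≤ A / a := by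
  have hA0 : 0 < A := pos_of_mul_pos_right (one_pos.trans_le hA) hlam.le
  set c := 1 + μ / lam with hc
  have hsq : a ^ 2 ≤ c * (a * A) + c * A ^ 2 := by
    refine le_of_mul_le_mul_left ?_ hlam
    calc lam * a ^ 2 = (A + a) * (1 + μ * A) := hq
      _ ≤ (A + a) * ((lam + μ) * A) := by gcongr; linarith
      _ = lam * (c * (a * A) + c * A ^ 2) := by rw [hc]; field_simp; ring
  have ht : (a / A) ^ 2 ≤ c * (a / A) + c := by
    rw [div_pow, div_le_iff₀ (by positivity)]
    field_simp
    linarith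
  have h2t : 2 * (a / A) ≤ c * (1 + √(1 + 4 * lam / μ)) := by
    linarith [two_mul_le_add_sqrt_of_sq_le ht, sqrt_sq_add_four_mul_le hlam hμ]
  rw [mul_assoc, ← mul_inv, ← div_eq_mul_inv, div_le_div_iff₀ (by positivity) ha]
  rw [← mul_div_assoc, div_le_iff₀ hA0] at h2t
  linarith

theorem div_eq_lam_mul_sub_one (ha : a ≠ 0) (hq : lam * a ^ 2 = A + a) : A / a = lam * a - 1 := by
  field_simp; linarith

end Ratio

theorem div_five_le_and_le_of_mul_add_one_eq {x q : ℕ → ℝ} (hx0 : x 0 = 0) (hq : ∀ n, 0 ≤ q n)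
    (hqx : ∀ n, q n * (q n + 1) = x n) (hx : ∀ n, x (n + 1) = x n + q n + 1) (n : ℕ) :
    (n : ℝ) / 5 ≤ q n ∧ q n ≤ n := by
  have hqn (n : ℕ) (hl : (n / 5 : ℝ) * (n / 5 + 1) ≤ x n) (hu : x n ≤ n * (n + 1)) :
      (n : ℝ) / 5 ≤ q n ∧ q n ≤ n :=
    ⟨le_of_mul_add_one_le_mul_add_one (hq n) (hqx n ▸ hl),
      le_of_mul_add_one_le_mul_add_one n.cast_nonneg (hqx n ▸ hu)⟩
  have hxn (n : ℕ) : (n / 5 : ℝ) * (n / 5 + 1) ≤ x n ∧ x n ≤ n * (n + 1) := by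
    induction n with
    | zero => simp [hx0]
    | succ n ih =>
      obtain ⟨hql, hqu⟩ := hqn n ih.1 ih.2
      rw [hx n]; push_cast
      constructor <;> nlinarith [ih.1, ih.2, hql, hqu]
  exact hqn n (hxn n).1 (hxn n).2

namespace IsAcceleratedSeq_s15

variable {lam μ : ℝ} {A a : ℕ → ℝ}

theorem A_nonneg (h : IsAcceleratedSeq_s15 lam μ A a) (r : ℕ) : 0 ≤ A r := by
  have := h.lam_pos
  have := h.mu_nonneg
  induction r with
  | zero => rw [h.A_zero]
  | succ r ih => rw [h.A_succ, h.a_succ]; positivity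

theorem a_pos (h : IsAcceleratedSeq_s15 lam μ A a) (r : ℕ) : 0 < a (r + 1) := by
  have := h.lam_pos
  have := h.mu_nonneg
  have := h.A_nonneg r
  rw [h.a_succ]; positivity

theorem lam_mul_sq_eq (h : IsAcceleratedSeq_s15 lam μ A a) (r : ℕ) :
    lam * a (r + 1) ^ 2 = (A r + a (r + 1)) * (1 + μ * A r) := by
  have := h.lam_pos
  have := h.mu_nonneg
  have := h.A_nonneg r
  exact lam_mul_sq_eq_of_eq_root h.lam_pos.ne' (by positivity) (h.a_succ r)

theorem one_le_lam_mul_A (h : IsAcceleratedSeq_s15 lam μ A a) {r : ℕ} (hr : 1 ≤ r) :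
    1 ≤ lam * A r := by
  obtain ⟨r, rfl⟩ := Nat.exists_eq_add_of_le' hr
  have ha := h.a_pos r
  have hA := h.A_nonneg r
  have hla : 1 * a (r + 1) ≤ lam * a (r + 1) * a (r + 1) := by
    nlinarith [h.lam_mul_sq_eq r, mul_nonneg (add_nonneg hA ha.le) (mul_nonneg h.mu_nonneg hA)]
  rw [h.A_succ, mul_add]
  nlinarith [le_of_mul_le_mul_right hla ha, mul_nonneg h.lam_pos.le hA]

theorem div_eq_lam_mul_sub_one (h : IsAcceleratedSeq_s15 lam 0 A a) (r : ℕ) :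
    A r / a (r + 1) = lam * a (r + 1) - 1 :=
  _root_.div_eq_lam_mul_sub_one (h.a_pos r).ne' (by simpa using h.lam_mul_sq_eq r)

theorem div_mul_div_add_one (h : IsAcceleratedSeq_s15 lam 0 A a) (r : ℕ) :
    A r / a (r + 1) * (A r / a (r + 1) + 1) = lam * A r := by
  rw [h.div_eq_lam_mul_sub_one r]
  linear_combination lam * h.lam_mul_sq_eq r

theorem lam_mul_A_succ (h : IsAcceleratedSeq_s15 lam 0 A a) (r : ℕ) :
    lam * A (r + 1) = lam * A r + A r / a (r + 1) + 1 := by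
  rw [h.div_eq_lam_mul_sub_one r, h.A_succ]
  ring

theorem A_div_a_succ_nonneg (h : IsAcceleratedSeq_s15 lam μ A a) (r : ℕ) : 0 ≤ A r / a (r + 1) :=
  div_nonneg (h.A_nonneg r) (h.a_pos r).le

end IsAcceleratedSeq_s15

/-- Bounds on `A_r / a_{r+1}` for the accelerated coefficients. -/
theorem stmt_15 (lam μ : ℝ) (hlam : 0 < lam) (hμ : 0 ≤ μ)
    (A a : ℕ → ℝ) (hA0 : A 0 = 0)
    (harec : ∀ r, a (r + 1)
      = ((1 + μ * A r)
          + Real.sqrt ((1 + μ * A r) ^ 2 + 4 * lam * A r * (1 + μ * A r)))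
        / (2 * lam))
    (hArec : ∀ r, A (r + 1) = A r + a (r + 1)) :
    ∀ r : ℕ, 1 ≤ r →
      (0 < μ →
        2 * (1 + μ / lam)⁻¹ * (1 + Real.sqrt (1 + 4 * lam / μ))⁻¹ ≤ A r / a (r + 1) ∧
        A r / a (r + 1) ≤ 2 * lam / μ) ∧
      (μ = 0 →
        (r : ℝ) / 5 ≤ A r / a (r + 1) ∧ A r / a (r + 1) ≤ (r : ℝ)) := by
  have h : IsAcceleratedSeq_s15 lam μ A a := ⟨hlam, hμ, hA0, harec, hArec⟩
  intro r hr
  refine ⟨fun hμpos => ⟨?_, ?_⟩, fun hμ0 => ?_⟩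
  · exact inv_mul_inv_le_div_of_lam_mul_sq_eq hlam hμpos (h.one_le_lam_mul_A hr) (h.a_pos r)
      (h.lam_mul_sq_eq r)
  · exact div_le_of_lam_mul_sq_eq hlam hμpos (h.A_nonneg r) (h.a_pos r) (h.lam_mul_sq_eq r)
  · subst hμ0
    exact div_five_le_and_le_of_mul_add_one_eq (x := fun n => lam * A n)
      (q := fun n => A n / a (n + 1)) (by simp [hA0]) h.A_div_a_succ_nonneg h.div_mul_div_add_one h.lam_mul_A_succ r
end

section
/- (Slow growth of the coefficients a_r.) Consider the sequences A_r, B_r, a_r defined by the accelerated recursion with parameters λ > 0 and μ ≥ 0. For every r ≥ 0: if μ > 0, then a_{r+2}/a_{r+1} ≤ (1/2)·(1 + μ/λ)·(1 + 2λ/μ)·(1 + √(1 + 4λ/μ)); if μ = 0, then 1 ≤ a_{r+2}/a_{r+1} ≤ 4. -/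
/-- Slow growth of the accelerated coefficients `a_r`. -/
theorem stmt_16 (lam μ : ℝ) (hlam : 0 < lam) (hμ : 0 ≤ μ)
    (A a : ℕ → ℝ) (hA0 : A 0 = 0)
    (harec : ∀ r, a (r + 1)
      = ((1 + μ * A r)
          + Real.sqrt ((1 + μ * A r) ^ 2 + 4 * lam * A r * (1 + μ * A r)))
        / (2 * lam))
    (hArec : ∀ r, A (r + 1) = A r + a (r + 1)) :
    ∀ r : ℕ,
      (0 < μ →
        a (r + 2) / a (r + 1)
          ≤ (1 / 2) * (1 + μ / lam) * (1 + 2 * lam / μ)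
              * (1 + Real.sqrt (1 + 4 * lam / μ))) ∧
      (μ = 0 →
        1 ≤ a (r + 2) / a (r + 1) ∧ a (r + 2) / a (r + 1) ≤ 4) := by
  -- nonnegativity of A
  have hA : ∀ r, 0 ≤ A r := by
    intro r
    induction r with
    | zero => simp [hA0]
    | succ n ih =>
      have hB : (0:ℝ) ≤ 1 + μ * A n := by nlinarith [mul_nonneg hμ ih]
      have ha : 0 ≤ a (n + 1) := by
        rw [harec]
        apply div_nonneg _ (by linarith)
        have := Real.sqrt_nonneg ((1 + μ * A n) ^ 2 + 4 * lam * A n * (1 + μ * A n))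
        linarith
      rw [hArec]; linarith
  -- lower bound for a
  have alow : ∀ r, (1 + μ * A r) / lam ≤ a (r + 1) := by
    intro r
    have hB0 : (0:ℝ) ≤ 1 + μ * A r := by nlinarith [mul_nonneg hμ (hA r)]
    have hpos : (0:ℝ) ≤ 4 * lam * A r * (1 + μ * A r) := by
      have := hA r
      positivity
    have hsq : (1 + μ * A r) ≤ Real.sqrt ((1 + μ * A r) ^ 2 + 4 * lam * A r * (1 + μ * A r)) := by
      calc (1 + μ * A r) = Real.sqrt ((1 + μ * A r) ^ 2) := (Real.sqrt_sq hB0).symm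
        _ ≤ _ := Real.sqrt_le_sqrt (by linarith)
    rw [harec r, div_le_div_iff₀ hlam (by linarith)]
    nlinarith [hsq]
  have apos : ∀ r, 0 < a (r + 1) := by
    intro r
    have hB0 : (0:ℝ) ≤ μ * A r := mul_nonneg hμ (hA r)
    have h1 : (0:ℝ) < (1 + μ * A r) / lam := by positivity
    linarith [alow r]
  intro r
  constructor
  · -- μ > 0
    intro hμpos
    set s := Real.sqrt (1 + 4 * lam / μ) with hsdef
    have hs0 : 0 ≤ s := Real.sqrt_nonneg _
    have hssq : s ^ 2 = 1 + 4 * lam / μ := Real.sq_sqrt (by positivity)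
    have hB1 : (0:ℝ) ≤ 1 + μ * A (r + 1) := by nlinarith [mul_nonneg hμ (hA (r + 1))]
    -- upper bound for a (r+2)
    have aup : a (r + 2) ≤ (1 + μ * A (r + 1)) * (1 + s) / (2 * lam) := by
      have hkey : Real.sqrt ((1 + μ * A (r + 1)) ^ 2 + 4 * lam * A (r + 1) * (1 + μ * A (r + 1)))
          ≤ (1 + μ * A (r + 1)) * s := by
        have h1 : (1 + μ * A (r + 1)) ^ 2 + 4 * lam * A (r + 1) * (1 + μ * A (r + 1))
            ≤ ((1 + μ * A (r + 1)) * s) ^ 2 := by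
          have h2 : ((1 + μ * A (r + 1)) * s) ^ 2 = (1 + μ * A (r + 1)) ^ 2 * (1 + 4 * lam / μ) := by
            rw [mul_pow, hssq]
          rw [h2]
          have key : 4 * lam * A (r + 1) * (1 + μ * A (r + 1))
              ≤ (1 + μ * A (r + 1)) ^ 2 * (4 * lam / μ) := by
            rw [← mul_div_assoc, le_div_iff₀ hμpos]
            nlinarith [mul_nonneg (by linarith : (0:ℝ) ≤ 4 * lam) hB1, hA (r + 1)]
          nlinarith
        calc Real.sqrt _ ≤ Real.sqrt (((1 + μ * A (r + 1)) * s) ^ 2) := Real.sqrt_le_sqrt h1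
          _ = (1 + μ * A (r + 1)) * s := Real.sqrt_sq (by positivity)
      rw [harec (r + 1), div_le_div_iff₀ (by linarith) (by linarith)]
      nlinarith [hkey]
    -- main chain
    have hq := apos r
    rw [div_le_iff₀ hq]
    have hBq : 1 + μ * A (r + 1) ≤ (lam + μ) * a (r + 1) := by
      have h1 : 1 + μ * A r ≤ lam * a (r + 1) := by
        have h := alow r
        rw [div_le_iff₀ hlam] at h
        linarith
      rw [hArec]; nlinarith [mul_nonneg hμ (apos r).le]
    have hC : (1 / 2) * (1 + μ / lam) * (1 + 2 * lam / μ) * (1 + s)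
        = (lam + μ) * (μ + 2 * lam) * (1 + s) / (2 * lam * μ) := by
      field_simp
    rw [hC, div_mul_eq_mul_div, le_div_iff₀ (by positivity)]
    rw [le_div_iff₀ (by linarith : (0:ℝ) < 2 * lam)] at aup
    have t1 : μ * (a (r + 2) * (2 * lam)) ≤ μ * ((1 + μ * A (r + 1)) * (1 + s)) :=
      mul_le_mul_of_nonneg_left aup hμ
    have t3 : (1 + μ * A (r + 1)) * (μ * (1 + s)) ≤ ((lam + μ) * a (r + 1)) * (μ * (1 + s)) :=
      mul_le_mul_of_nonneg_right hBq (by positivity)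
    have t4 : 0 ≤ 2 * lam * ((lam + μ) * a (r + 1) * (1 + s)) := by
      have := (apos r).le
      have hlμ : (0:ℝ) ≤ lam + μ := by linarith
      positivity
    nlinarith [t1, t3, t4]
  · -- μ = 0
    intro hμ0
    subst hμ0
    simp only [zero_mul, add_zero, mul_one, one_pow] at harec alow
    have harec' : ∀ k, a (k + 1) = (1 + Real.sqrt (1 + 4 * lam * A k)) / (2 * lam) := harec
    have hlow : ∀ k, 1 / lam ≤ a (k + 1) := by
      intro k; simpa using alow k
    have hmono : a (r + 1) ≤ a (r + 2) := by
      rw [harec' r, harec' (r + 1)]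
      have hsq : Real.sqrt (1 + 4 * lam * A r) ≤ Real.sqrt (1 + 4 * lam * A (r + 1)) := by
        apply Real.sqrt_le_sqrt
        have := (apos r).le
        rw [hArec]
        nlinarith
      apply div_le_div_of_nonneg_right (by linarith) (by linarith)
    constructor
    · rw [le_div_iff₀ (apos r)]; linarith
    · rw [div_le_iff₀ (apos r)]
      set q := a (r + 1)
      have hq := apos r
      have hX0 : (0:ℝ) ≤ 1 + 4 * lam * A r := by nlinarith [hA r]
      have hsqX : Real.sqrt (1 + 4 * lam * A r) = 2 * lam * q - 1 := by
        have := harec' r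
        field_simp at this
        linarith
      have hXval : 1 + 4 * lam * A r = (2 * lam * q - 1) ^ 2 := by
        rw [← hsqX, Real.sq_sqrt hX0]
      have hY : 1 + 4 * lam * A (r + 1) = 4 * lam ^ 2 * q ^ 2 + 1 := by
        rw [hArec]; nlinarith [hXval]
      have hsqY : Real.sqrt (1 + 4 * lam * A (r + 1)) ≤ 2 * lam * q + 1 := by
        rw [hY]
        calc Real.sqrt (4 * lam ^ 2 * q ^ 2 + 1) ≤ Real.sqrt ((2 * lam * q + 1) ^ 2) := by
              apply Real.sqrt_le_sqrt; nlinarith [mul_pos hlam hq]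
          _ = 2 * lam * q + 1 := Real.sqrt_sq (by nlinarith [mul_pos hlam hq])
      have h1l : 1 / lam ≤ q := hlow r
      have h1l' : 1 ≤ lam * q := by
        rw [div_le_iff₀ hlam] at h1l; linarith
      rw [harec' (r + 1), div_le_iff₀ (by linarith)]
      nlinarith [hsqY]
end

section
/- (Consensus-error recursion for the x-iterates.) Let W be a gossip matrix with spectral gap parameter ρ ∈ (0,1). Let A ≥ 0, a > 0 and A' := A + a. Given x_i, v_i, x_i⁺ ∈ ℝ^d (i = 1,…,n), set y_i := (A·x_i + a·v_i)/A' and x_i^{new} := ∑_{j=1}^n W_{ij}·x_j⁺. Then A'·Ξ_x^{new} ≤ ρ·A·Ξ_x + (ρ²·A'/(1−ρ))·(1/n)·∑_{i=1}^n ‖x_i⁺ − y_i‖² + ρ·a·Ξ_v, where Ξ_x := (1/n)·∑_i ‖x_i − x̄‖², Ξ_v := (1/n)·∑_i ‖v_i − v̄‖², Ξ_x^{new} := (1/n)·∑_i ‖x_i^{new} − x̄^{new}‖², and x̄, v̄, x̄^{new} denote the respective averages over i. -/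
open scoped BigOperators

/-!
The mixing step contracts the consensus error of the half-step iterates `x⁺` by `ρ²`. Writing
`x⁺ = y + (x⁺ - y)`, the consensus error of `x⁺` is the squared norm of a sum of two centred vectors
in `ℓ²`, which Young's inequality with weights `ρ` and `1 - ρ` splits into `ρ⁻¹` times the consensus
error of `y` plus `(1 - ρ)⁻¹` times that of `x⁺ - y`. The former is at most the convex combination
`(A Ξ_x + a Ξ_v) / A'` because `y` is a convex combination of `x` and `v` and `‖·‖²` is convex, and the
latter is at most the mean of `‖x⁺ - y‖²` since a variance is at most the second moment.
-/

lemma sq_mul_add_sq_le {ρ : ℝ} (hρ0 : 0 < ρ) (hρ1 : ρ < 1) (s t : ℝ) :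
    ρ ^ 2 * (s + t) ^ 2 ≤ ρ * s ^ 2 + ρ ^ 2 / (1 - ρ) * t ^ 2 := by
  have h1ρ : 0 < 1 - ρ := by linarith
  -- the difference of the two sides is `ρ / (1 - ρ) * ((1 - ρ) s - ρ t)²`
  rw [div_mul_eq_mul_div, ← sub_le_iff_le_add', le_div_iff₀ h1ρ]
  nlinarith [mul_nonneg hρ0.le (sq_nonneg ((1 - ρ) * s - ρ * t))]

lemma sq_mul_norm_add_sq_le {F : Type*} [SeminormedAddCommGroup F] {ρ : ℝ} (hρ0 : 0 < ρ)
    (hρ1 : ρ < 1) (u v : F) :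
    ρ ^ 2 * ‖u + v‖ ^ 2 ≤ ρ * ‖u‖ ^ 2 + ρ ^ 2 / (1 - ρ) * ‖v‖ ^ 2 := by
  have hsq : ‖u + v‖ ^ 2 ≤ (‖u‖ + ‖v‖) ^ 2 := pow_le_pow_left₀ (norm_nonneg _) (norm_add_le u v) 2
  calc ρ ^ 2 * ‖u + v‖ ^ 2 ≤ ρ ^ 2 * (‖u‖ + ‖v‖) ^ 2 := by gcongr
    _ ≤ _ := sq_mul_add_sq_le hρ0 hρ1 _ _

namespace Consensus

variable {ι E : Type*} [Fintype ι] [NormedAddCommGroup E] [InnerProductSpace ℝ E]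

noncomputable def mean (z : ι → E) : E := (Fintype.card ι : ℝ)⁻¹ • ∑ i, z i

/-- `n * Ξ_z` in the notation of the statement. -/
noncomputable def dispersion (z : ι → E) : ℝ := ∑ i, ‖z i - mean z‖ ^ 2

lemma mean_fin {n : ℕ} (z : Fin n → E) : mean z = (1 / (n : ℝ)) • ∑ i, z i := by
  simp [mean]

-- `ι` may be empty: then both sides vanish
lemma sum_eq_card_smul_mean (z : ι → E) : ∑ i, z i = (Fintype.card ι : ℝ) • mean z := by
  rcases isEmpty_or_nonempty ι with hι | hι
  · simp
  · rw [mean, smul_smul, mul_inv_cancel₀ (by simp [Fintype.card_ne_zero]), one_smul]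

lemma mean_add (z w : ι → E) : mean (z + w) = mean z + mean w := by
  simp only [mean, Pi.add_apply, Finset.sum_add_distrib, smul_add]

lemma mean_smul (c : ℝ) (z : ι → E) : mean (c • z) = c • mean z := by
  simp only [mean, Pi.smul_apply, ← Finset.smul_sum, smul_comm c]

lemma dispersion_eq_norm_sq (z : ι → E) :
    dispersion z = ‖WithLp.toLp 2 (fun i => z i - mean z)‖ ^ 2 := by
  rw [PiLp.norm_sq_eq_of_L2]
  rfl

lemma dispersion_le_sum_norm_sq (z : ι → E) : dispersion z ≤ ∑ i, ‖z i‖ ^ 2 := by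
  have hexpand : dispersion z = ∑ i, ‖z i‖ ^ 2 - Fintype.card ι * ‖mean z‖ ^ 2 := by
    simp only [dispersion, norm_sub_sq_real, Finset.sum_add_distrib, Finset.sum_sub_distrib,
      ← Finset.mul_sum, ← sum_inner, sum_eq_card_smul_mean z, real_inner_smul_left,
      real_inner_self_eq_norm_sq, Finset.sum_const, Finset.card_univ, nsmul_eq_mul]
    ring
  rw [hexpand]
  have : 0 ≤ (Fintype.card ι : ℝ) * ‖mean z‖ ^ 2 := by positivity
  linarith

lemma dispersion_add_young {ρ : ℝ} (hρ0 : 0 < ρ) (hρ1 : ρ < 1) (z w : ι → E) :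
    ρ ^ 2 * dispersion (z + w) ≤ ρ * dispersion z + ρ ^ 2 / (1 - ρ) * dispersion w := by
  have hcentre : (WithLp.toLp 2 (fun i => (z + w) i - mean (z + w)) : PiLp 2 fun _ : ι => E)
      = WithLp.toLp 2 (fun i => z i - mean z) + WithLp.toLp 2 (fun i => w i - mean w) := by
    ext i
    simp only [Pi.add_apply, mean_add, PiLp.add_apply]
    abel
  simp only [dispersion_eq_norm_sq, hcentre]
  exact sq_mul_norm_add_sq_le hρ0 hρ1 _ _

lemma dispersion_convex_comb_le {s t : ℝ} (hs : 0 ≤ s) (ht : 0 ≤ t) (hst : s + t = 1)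
    (x v : ι → E) : dispersion (s • x + t • v) ≤ s * dispersion x + t * dispersion v := by
  have hsq : ConvexOn ℝ Set.univ (fun p : E => ‖p‖ ^ 2) :=
    convexOn_univ_norm.pow (fun _ _ => norm_nonneg _) 2
  have hpoint (i : ι) : ‖(s • x + t • v) i - mean (s • x + t • v)‖ ^ 2
      ≤ s * ‖x i - mean x‖ ^ 2 + t * ‖v i - mean v‖ ^ 2 := by
    have hcentre : (s • x + t • v) i - mean (s • x + t • v)
        = s • (x i - mean x) + t • (v i - mean v) := by
      simp only [mean_add, mean_smul, Pi.add_apply, Pi.smul_apply, smul_sub]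
      abel
    rw [hcentre]
    exact hsq.2 (Set.mem_univ _) (Set.mem_univ _) hs ht hst
  calc dispersion (s • x + t • v)
      ≤ ∑ i, (s * ‖x i - mean x‖ ^ 2 + t * ‖v i - mean v‖ ^ 2) :=
        Finset.sum_le_sum fun i _ => hpoint i
    _ = s * dispersion x + t * dispersion v := by
        rw [Finset.sum_add_distrib, ← Finset.mul_sum, ← Finset.mul_sum, dispersion, dispersion]

lemma mean_mix_of_sum_col_eq_one {W : ι → ι → ℝ} (hWcol : ∀ j, ∑ i, W i j = 1) (z : ι → E) :
    mean (fun i => ∑ j, W i j • z j) = mean z := by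
  simp only [mean, Finset.sum_comm (γ := ι) (f := fun i j => W i j • z j), ← Finset.sum_smul,
    hWcol, one_smul]

lemma add_mul_dispersion_weighted_le {A a : ℝ} (hA : 0 ≤ A) (ha : 0 < a) (x v : ι → E) :
    (A + a) * dispersion ((A + a)⁻¹ • (A • x + a • v)) ≤ A * dispersion x + a * dispersion v := by
  have hA' : 0 < A + a := by linarith
  have hweights : (A + a)⁻¹ • (A • x + a • v) = (A / (A + a)) • x + (a / (A + a)) • v := by
    rw [smul_add, smul_smul, smul_smul, inv_mul_eq_div, inv_mul_eq_div]
  rw [hweights]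
  calc (A + a) * dispersion ((A / (A + a)) • x + (a / (A + a)) • v)
      ≤ (A + a) * (A / (A + a) * dispersion x + a / (A + a) * dispersion v) := by
        gcongr
        exact dispersion_convex_comb_le (by positivity) (by positivity) (by field_simp) x v
    _ = A * dispersion x + a * dispersion v := by field_simp

lemma add_mul_dispersion_le_of_mix {ρ A a : ℝ} (hρ0 : 0 < ρ) (hρ1 : ρ < 1) (hA : 0 ≤ A)
    (ha : 0 < a) (x v xp xnew : ι → E) (hmix : dispersion xnew ≤ ρ ^ 2 * dispersion xp) :
    (A + a) * dispersion xnew ≤ ρ * A * dispersion x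
      + ρ ^ 2 * (A + a) / (1 - ρ) * ∑ i, ‖xp i - ((A + a)⁻¹ • (A • x + a • v)) i‖ ^ 2
      + ρ * a * dispersion v := by
  set y := (A + a)⁻¹ • (A • x + a • v)
  have hA' : 0 < A + a := by linarith
  have hc : 0 ≤ ρ ^ 2 / (1 - ρ) := div_nonneg (sq_nonneg ρ) (by linarith)
  have hsplit := dispersion_add_young hρ0 hρ1 y (xp - y)
  rw [add_sub_cancel] at hsplit
  calc (A + a) * dispersion xnew ≤ (A + a) * (ρ ^ 2 * dispersion xp) := by gcongr
    _ ≤ (A + a) * (ρ * dispersion y + ρ ^ 2 / (1 - ρ) * ∑ i, ‖xp i - y i‖ ^ 2) := by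
      gcongr
      exact hsplit.trans (by gcongr; exact dispersion_le_sum_norm_sq (xp - y))
    _ = ρ * ((A + a) * dispersion y) + ρ ^ 2 * (A + a) / (1 - ρ) * ∑ i, ‖xp i - y i‖ ^ 2 := by
      ring
    _ ≤ _ := by
      nlinarith [mul_le_mul_of_nonneg_left (add_mul_dispersion_weighted_le hA ha x v) hρ0.le]

end Consensus

open Consensus in
theorem stmt_18_general (d n : ℕ)
    (W : Matrix (Fin n) (Fin n) ℝ) (ρ : ℝ) (hρ0 : 0 < ρ) (hρ1 : ρ < 1)
    (hWcol : ∀ j, ∑ i, W i j = 1)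
    (hWgap : ∀ z : Fin n → Vec d,
      ∑ i, ‖(∑ j, W i j • z j) - (1 / (n : ℝ)) • ∑ k, z k‖ ^ 2
        ≤ ρ ^ 2 * ∑ i, ‖z i - (1 / (n : ℝ)) • ∑ k, z k‖ ^ 2)
    (A a : ℝ) (hA : 0 ≤ A) (ha : 0 < a)
    (x v xp y xnew : Fin n → Vec d)
    (hy : ∀ i, y i = (A + a)⁻¹ • (A • x i + a • v i))
    (hxnew : ∀ i, xnew i = ∑ j, W i j • xp j)
    (xbar vbar xbarnew : Vec d)
    (hxbar : xbar = (1 / (n : ℝ)) • ∑ i, x i)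
    (hvbar : vbar = (1 / (n : ℝ)) • ∑ i, v i)
    (hxbarnew : xbarnew = (1 / (n : ℝ)) • ∑ i, xnew i)
    (Xix Xiv Xixnew : ℝ)
    (hXix : Xix = (1 / (n : ℝ)) * ∑ i, ‖x i - xbar‖ ^ 2)
    (hXiv : Xiv = (1 / (n : ℝ)) * ∑ i, ‖v i - vbar‖ ^ 2)
    (hXixnew : Xixnew = (1 / (n : ℝ)) * ∑ i, ‖xnew i - xbarnew‖ ^ 2) :
    (A + a) * Xixnew
      ≤ ρ * A * Xix
        + (ρ ^ 2 * (A + a) / (1 - ρ)) * ((1 / (n : ℝ)) * ∑ i, ‖xp i - y i‖ ^ 2)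
        + ρ * a * Xiv := by
  have hmix : dispersion xnew ≤ ρ ^ 2 * dispersion xp := by
    rw [show xnew = fun i => ∑ j, W i j • xp j from funext hxnew]
    simpa only [dispersion, mean_mix_of_sum_col_eq_one hWcol, mean_fin] using hWgap xp
  have hy' : y = (A + a)⁻¹ • (A • x + a • v) := funext hy
  have key := add_mul_dispersion_le_of_mix hρ0 hρ1 hA ha x v xp xnew hmix
  rw [← hy'] at key
  rw [← mean_fin] at hxbar hvbar hxbarnew
  subst hxbar hvbar hxbarnew hXix hXiv hXixnew
  have := mul_le_mul_of_nonneg_left key (by positivity : (0 : ℝ) ≤ 1 / n)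
  simp only [dispersion] at this
  linarith

/-- Consensus-error recursion for the x-iterates. -/
theorem stmt_18 (d n : ℕ) (hn : 1 ≤ n)
    (W : Matrix (Fin n) (Fin n) ℝ) (ρ : ℝ) (hρ0 : 0 < ρ) (hρ1 : ρ < 1)
    (hWsymm : ∀ i j, W i j = W j i)
    (hWcol : ∀ j, ∑ i, W i j = 1)
    (hWgap : ∀ z : Fin n → Vec d,
      ∑ i, ‖(∑ j, W i j • z j) - (1 / (n : ℝ)) • ∑ k, z k‖ ^ 2
        ≤ ρ ^ 2 * ∑ i, ‖z i - (1 / (n : ℝ)) • ∑ k, z k‖ ^ 2)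
    (A a : ℝ) (hA : 0 ≤ A) (ha : 0 < a)
    (x v xp y xnew : Fin n → Vec d)
    (hy : ∀ i, y i = (A + a)⁻¹ • (A • x i + a • v i))
    (hxnew : ∀ i, xnew i = ∑ j, W i j • xp j)
    (xbar vbar xbarnew : Vec d)
    (hxbar : xbar = (1 / (n : ℝ)) • ∑ i, x i)
    (hvbar : vbar = (1 / (n : ℝ)) • ∑ i, v i)
    (hxbarnew : xbarnew = (1 / (n : ℝ)) • ∑ i, xnew i)
    (Xix Xiv Xixnew : ℝ)
    (hXix : Xix = (1 / (n : ℝ)) * ∑ i, ‖x i - xbar‖ ^ 2)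
    (hXiv : Xiv = (1 / (n : ℝ)) * ∑ i, ‖v i - vbar‖ ^ 2)
    (hXixnew : Xixnew = (1 / (n : ℝ)) * ∑ i, ‖xnew i - xbarnew‖ ^ 2) :
    (A + a) * Xixnew
      ≤ ρ * A * Xix
        + (ρ ^ 2 * (A + a) / (1 - ρ)) * ((1 / (n : ℝ)) * ∑ i, ‖xp i - y i‖ ^ 2)
        + ρ * a * Xiv :=
  stmt_18_general d n W ρ hρ0 hρ1 hWcol hWgap A a hA ha x v xp y xnew hy hxnew xbar vbar xbarnew
    hxbar hvbar hxbarnew Xix Xiv Xixnew hXix hXiv hXixnew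
end

section
/- (Gradient bound at approximate proximal solutions.) Let F : ℝ^d → ℝ be differentiable and μ-strongly convex with μ > 0 (for all u, w ∈ ℝ^d, F(u) ≥ F(w) + ⟨∇F(w), u − w⟩ + (μ/2)·‖u − w‖²), and let x⋆ be its minimizer, so ∇F(x⋆) = 0. Suppose 0 < α < μ and x, y ∈ ℝ^d satisfy ‖∇F(x)‖ ≤ α·‖y − x⋆‖. Then ‖∇F(x)‖ ≤ (α·μ/(μ − α))·‖x − y‖. -/
open scoped BigOperators RealInnerProductSpace

/-- Gradient bound at approximate proximal solutions. -/
theorem stmt_19 (d : ℕ)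
    (F : Vec d → ℝ) (gF : Vec d → Vec d)
    (hdiff : ∀ x, HasGradientAt F (gF x) x)
    (μ : ℝ) (hμ : 0 < μ)
    (hsc : ∀ u w : Vec d,
      F w + ⟪gF w, u - w⟫ + μ / 2 * ‖u - w‖ ^ 2 ≤ F u)
    (xstar : Vec d) (hmin : ∀ u, F xstar ≤ F u)
    (α : ℝ) (hα0 : 0 < α) (hαμ : α < μ)
    (x y : Vec d) (hx : ‖gF x‖ ≤ α * ‖y - xstar‖) :
    ‖gF x‖ ≤ α * μ / (μ - α) * ‖x - y‖ := by
  have hg0 : gF xstar = 0 := by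
    have h1 := (hdiff xstar).hasFDerivAt
    have h2 : IsLocalMin F xstar := Filter.Eventually.of_forall hmin
    have h3 := h2.hasFDerivAt_eq_zero h1
    have := congrArg (InnerProductSpace.toDual ℝ (Vec d)).symm h3
    simpa using this
  -- key: μ ‖x - xstar‖² ≤ ⟪gF x, x - xstar⟫
  have h1 := hsc x xstar
  have h2 := hsc xstar x
  rw [hg0] at h1
  simp only [inner_zero_left] at h1
  have hrev : ‖xstar - x‖ = ‖x - xstar‖ := norm_sub_rev _ _
  have hinn : ⟪gF x, xstar - x⟫ = -⟪gF x, x - xstar⟫ := by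
    rw [show xstar - x = -(x - xstar) by abel, inner_neg_right]
  rw [hrev, hinn] at h2
  have key : μ * ‖x - xstar‖ ^ 2 ≤ ⟪gF x, x - xstar⟫ := by linarith
  have hcs : ⟪gF x, x - xstar⟫ ≤ ‖gF x‖ * ‖x - xstar‖ := real_inner_le_norm _ _
  have hmu : μ * ‖x - xstar‖ ≤ ‖gF x‖ := by
    rcases eq_or_lt_of_le (norm_nonneg (x - xstar)) with h | h
    · rw [← h]; simpa using norm_nonneg (gF x)
    · nlinarith
  have htri : ‖y - xstar‖ ≤ ‖y - x‖ + ‖x - xstar‖ := by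
    calc ‖y - xstar‖ = ‖(y - x) + (x - xstar)‖ := by abel_nf
    _ ≤ ‖y - x‖ + ‖x - xstar‖ := norm_add_le _ _
  have hxy : ‖y - x‖ = ‖x - y‖ := norm_sub_rev _ _
  rw [hxy] at htri
  have h4 : ‖gF x‖ ≤ α * ‖x - y‖ + α * ‖x - xstar‖ := by nlinarith
  rw [div_mul_eq_mul_div, le_div_iff₀ (by linarith)]
  nlinarith [mul_le_mul_of_nonneg_left hmu hα0.le, mul_le_mul_of_nonneg_left h4 hμ.le]
end
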